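/- arXiv:1904.03037 — 4 statements merged into one kernel-verified Lean document; each statement's English description precedes it below -/
import Mathlib

section
/- For every real s ≥ 2 there exists a twice continuously differentiable function Φ : ℝ → ℝ such that Φ''(η) + s·Φ'(η) + Φ(η)(1 − Φ(η)) = 0 for all η ∈ ℝ, 0 < Φ(η) < 1 for all η, Φ is strictly monotone (decreasing), Φ(η) → 1 as η → −∞ and Φ(η) → 0 as η → +∞. That is, the FKPP equation has a monotone travelling front of speed s connecting the stable state 1 to the unstable state 0 for every speed s ≥ 2. -/
open Filter Topology Set

/-!
# Existence of monotone FKPP travelling fronts for all speeds `s ≥ 2`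

Strategy: in the phase plane, a decreasing front `Φ` with `Φ' = -p(Φ)`
corresponds to a solution `p` of `p' = Fv s u p := s - u(1-u)/p` on `(0,1)`
with `0 < p`.  We construct `p` trapped between the explicit barriers
`mlow = λ u(1-u)` and `Mup = (s/2) u(1-u)` (with `λ² + sλ = 1`), as a
monotone limit of backward solutions started on the upper barrier at points
`aₙ → 1`.  Finally `Φ` is obtained by inverting `u ↦ ∫_u^{1/2} dp⁻¹`.
-/


/-! Basic definitions: the phase-plane vector field `Fv s t q = s - t(1-t)/q`,
the decay rate `lam s` (positive root of `x^2 + s x = 1`), and the two barriers. -/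

noncomputable def Fv (s t q : ℝ) : ℝ := s - t * (1 - t) / q

noncomputable def lam (s : ℝ) : ℝ := (Real.sqrt (s ^ 2 + 4) - s) / 2

noncomputable def mlow (s u : ℝ) : ℝ := lam s * (u * (1 - u))

noncomputable def Mup (s u : ℝ) : ℝ := s / 2 * (u * (1 - u))

lemma sq_lam (s : ℝ) : Real.sqrt (s ^ 2 + 4) ^ 2 = s ^ 2 + 4 :=
  Real.sq_sqrt (by positivity)

lemma lam_pos {s : ℝ} (hs : 2 ≤ s) : 0 < lam s := by
  have h1 : s < Real.sqrt (s ^ 2 + 4) := by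
    have h0 : (0:ℝ) ≤ s := by linarith
    nlinarith [sq_lam s, Real.sqrt_nonneg (s ^ 2 + 4)]
  unfold lam; linarith

lemma lam_eq (s : ℝ) : lam s ^ 2 + s * lam s = 1 := by
  have := sq_lam s
  unfold lam; nlinarith

lemma lam_lt {s : ℝ} (hs : 2 ≤ s) : lam s < s / 2 := by
  have h1 : Real.sqrt (s ^ 2 + 4) < 2 * s := by
    have h0 : (0:ℝ) ≤ 2 * s := by linarith
    nlinarith [sq_lam s, Real.sqrt_nonneg (s ^ 2 + 4)]
  unfold lam; linarith

lemma inv_lam {s : ℝ} (hs : 2 ≤ s) : (lam s)⁻¹ = s + lam s := by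
  have h := lam_eq s
  have h0 := lam_pos hs
  field_simp
  nlinarith

lemma mlow_lt_Mup {s u : ℝ} (hs : 2 ≤ s) (hu : 0 < u) (hu1 : u < 1) :
    mlow s u < Mup s u := by
  have := lam_lt hs
  have : 0 < u * (1 - u) := by nlinarith
  unfold mlow Mup
  nlinarith [lam_lt hs]

lemma mlow_pos {s u : ℝ} (hs : 2 ≤ s) (hu : 0 < u) (hu1 : u < 1) : 0 < mlow s u := by
  have h0 := lam_pos hs
  have h1 : 0 < u * (1 - u) := by nlinarith
  unfold mlow; positivity

/-- value of the field on the lower barrier -/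
lemma Fv_mlow {s u : ℝ} (hs : 2 ≤ s) (hu : 0 < u) (hu1 : u < 1) :
    Fv s u (mlow s u) = -lam s := by
  have h0 := lam_pos hs
  have h1 : u * (1 - u) ≠ 0 := by nlinarith
  have h2 : (lam s)⁻¹ = s + lam s := inv_lam hs
  unfold Fv mlow
  rw [div_mul_eq_div_div_swap, div_self h1]
  field_simp at h2 ⊢
  nlinarith [lam_eq s]

/-- value of the field on the upper barrier -/
lemma Fv_Mup {s u : ℝ} (hs : 2 ≤ s) (hu : 0 < u) (hu1 : u < 1) :
    Fv s u (Mup s u) = s - 2 / s := by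
  have h1 : u * (1 - u) ≠ 0 := by nlinarith
  have h2 : s ≠ 0 := by linarith
  unfold Fv Mup
  rw [div_mul_eq_div_div_swap, div_self h1]
  field_simp

lemma hasDerivAt_mlow (s u : ℝ) : HasDerivAt (mlow s) (lam s * (1 - 2 * u)) u := by
  have : HasDerivAt (fun u : ℝ => lam s * (u * (1 - u))) (lam s * (1 - 2 * u)) u := by
    have h : HasDerivAt (fun u : ℝ => u * (1 - u)) (1 - 2 * u) u := by
      have := ((hasDerivAt_id u).mul ((hasDerivAt_const u (1:ℝ)).sub (hasDerivAt_id u)))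
      exact this.congr_deriv (by simp only [Pi.sub_apply, id]; ring)
    simpa using h.const_mul (lam s)
  exact this

lemma hasDerivAt_Mup (s u : ℝ) : HasDerivAt (Mup s) (s / 2 * (1 - 2 * u)) u := by
  have h : HasDerivAt (fun u : ℝ => u * (1 - u)) (1 - 2 * u) u := by
    have := ((hasDerivAt_id u).mul ((hasDerivAt_const u (1:ℝ)).sub (hasDerivAt_id u)))
    exact this.congr_deriv (by simp only [Pi.sub_apply, id]; ring)
  exact h.const_mul (s / 2)

/-! Slope sign helpers -/

lemma eventually_pos_right {h : ℝ → ℝ} {D u : ℝ} (hd : HasDerivWithinAt h D (Ici u) u)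
    (hD : 0 < D) (h0 : h u = 0) : ∀ᶠ x in 𝓝[>] u, 0 < h x := by
  have hslope := hasDerivWithinAt_iff_tendsto_slope.1 hd
  have hsub : 𝓝[>] u ≤ 𝓝[Ici u \ {u}] u := by
    apply nhdsWithin_mono
    intro x hx
    exact ⟨le_of_lt (show u < x from hx), ne_of_gt (show u < x from hx)⟩
  have := (hslope.mono_left hsub).eventually (eventually_gt_nhds (show (0:ℝ) < D from hD) |>.mono (fun y hy => hy))
  -- eventually slope > 0
  have h2 : ∀ᶠ x in 𝓝[>] u, 0 < slope h u x := by
    have : ∀ᶠ y in 𝓝 D, 0 < y := eventually_gt_nhds hD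
    exact (hslope.mono_left hsub).eventually this
  filter_upwards [h2, self_mem_nhdsWithin] with x hx (hx2 : u < x)
  rw [slope_def_field] at hx
  have : 0 < (h x - h u) / (x - u) := by
    simpa [div_eq_inv_mul] using hx
  have hxu : 0 < x - u := by linarith
  have := mul_pos this hxu
  rw [div_mul_cancel₀] at this <;> [skip; positivity]
  linarith [h0 ▸ this]

lemma eventually_neg_right {h : ℝ → ℝ} {D u : ℝ} (hd : HasDerivWithinAt h D (Ici u) u)
    (hD : D < 0) (h0 : h u = 0) : ∀ᶠ x in 𝓝[>] u, h x < 0 := by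
  have := eventually_pos_right (D := -D) (h := fun x => -h x) hd.neg (by linarith) (by simp [h0])
  filter_upwards [this] with x hx
  simpa using hx

lemma eventually_neg_left {h : ℝ → ℝ} {D u : ℝ} (hd : HasDerivWithinAt h D (Iic u) u)
    (hD : 0 < D) (h0 : h u = 0) : ∀ᶠ x in 𝓝[<] u, h x < 0 := by
  have hslope := hasDerivWithinAt_iff_tendsto_slope.1 hd
  have hsub : 𝓝[<] u ≤ 𝓝[Iic u \ {u}] u := by
    apply nhdsWithin_mono
    intro x hx
    exact ⟨le_of_lt (show x < u from hx), ne_of_lt hx⟩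

  have h2 : ∀ᶠ x in 𝓝[<] u, 0 < slope h u x := by
    have : ∀ᶠ y in 𝓝 D, 0 < y := eventually_gt_nhds hD
    exact (hslope.mono_left hsub).eventually this
  filter_upwards [h2, self_mem_nhdsWithin] with x hx (hx2 : x < u)
  rw [slope_def_field] at hx
  have hpos : 0 < (h x - h u) / (x - u) := by simpa [div_eq_inv_mul] using hx
  have hxu : x - u < 0 := by linarith
  nlinarith [div_mul_cancel₀ (h x - h u) (show x - u ≠ 0 by linarith), hpos, h0]

/-! Local existence with uniform step size and a priori bound (Picard–Lindelöf). -/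

noncomputable def epsStep (s d : ℝ) : ℝ := min 1 (d / (2 * (s + 8 / d)))


lemma epsStep_pos {s d : ℝ} (hs : 2 ≤ s) (hd : 0 < d) : 0 < epsStep s d := by
  have : 0 < s + 8 / d := by positivity
  unfold epsStep
  positivity

lemma epsStep_le_one (s d : ℝ) : epsStep s d ≤ 1 := min_le_left _ _

lemma localSol {s d t₀ q₀ : ℝ} (hs : 2 ≤ s) (hd : 0 < d) (ht₀ : t₀ ∈ Icc (0:ℝ) 1)
    (hq₀ : d ≤ q₀) :
    ∃ f : ℝ → ℝ, f t₀ = q₀ ∧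
      (∀ t ∈ Ioo (t₀ - epsStep s d) (t₀ + epsStep s d), HasDerivAt f (Fv s t (f t)) t) ∧
      (∀ t ∈ Icc (t₀ - epsStep s d) (t₀ + epsStep s d),
        f t ∈ Metric.closedBall q₀ (d / 2)) := by
  set ε := epsStep s d with hεdef
  have hε : 0 < ε := epsStep_pos hs hd
  have hε1 : ε ≤ 1 := epsStep_le_one s d
  have hq₀pos : 0 < q₀ := lt_of_lt_of_le hd hq₀
  have hd2 : (0:ℝ) < d / 2 := by linarith
  -- constants
  set C : ℝ := s + 8 / d with hCdef
  have hCpos : 0 < C := by positivity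
  set L : NNReal := ⟨16 / d ^ 2, by positivity⟩ with hLdef
  -- key facts about points in the ball
  have hball : ∀ q ∈ Metric.closedBall q₀ (d / 2), d / 2 ≤ q := by
    intro q hq
    rw [Metric.mem_closedBall, Real.dist_eq, abs_le] at hq
    linarith
  have htrange : ∀ t ∈ Icc (t₀ - ε) (t₀ + ε), |t * (1 - t)| ≤ 4 := by
    intro t ht
    rcases ht with ⟨h1, h2⟩
    rcases ht₀ with ⟨h3, h4⟩
    have ht1 : -1 ≤ t := by linarith
    have ht2 : t ≤ 2 := by linarith
    rw [abs_mul]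
    have e1 : |t| ≤ 2 := abs_le.2 ⟨by linarith, ht2⟩
    have e2 : |1 - t| ≤ 2 := abs_le.2 ⟨by linarith, by linarith⟩
    nlinarith [abs_nonneg t, abs_nonneg (1 - t)]
  set C' : NNReal := ⟨C, le_of_lt hCpos⟩ with hC'
  set R : NNReal := ⟨d / 2, le_of_lt hd2⟩ with hR
  set t₀' : Icc (t₀ - ε) (t₀ + ε) := ⟨t₀, by constructor <;> linarith⟩ with ht₀'
  have hpl : IsPicardLindelof (Fv s) t₀' q₀ R 0 C' L := by
    constructor
    · -- Lipschitz
      intro t ht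
      apply LipschitzOnWith.of_dist_le_mul
      intro x hx y hy
      have hxd := hball x hx
      have hyd := hball y hy
      have hxpos : 0 < x := by linarith
      have hypos : 0 < y := by linarith
      rw [Real.dist_eq, Real.dist_eq]
      have hFxy : Fv s t x - Fv s t y = t * (1 - t) * (x - y) / (x * y) := by
        unfold Fv
        field_simp
        ring
      rw [hFxy]
      rw [abs_div, abs_mul]
      have h16 : (L : ℝ) = 16 / d ^ 2 := rfl
      have hxy : d / 2 * (d / 2) ≤ x * y := by nlinarith
      have habs : |x * y| = x * y := abs_of_pos (by positivity)
      rw [habs]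
      have h4 := htrange t ht
      have hnum : |t * (1 - t)| * |x - y| ≤ 4 * |x - y| := by
        have := abs_nonneg (x - y)
        nlinarith
      calc |t * (1 - t)| * |x - y| / (x * y) ≤ 4 * |x - y| / (d / 2 * (d / 2)) := by
            apply div_le_div₀ (by positivity) hnum (by positivity) hxy
        _ = (16 / d ^ 2) * |x - y| := by field_simp; ring
        _ = (L : ℝ) * |x - y| := by rw [h16]
    · -- continuity in t
      intro q hq
      have : 0 < q := lt_of_lt_of_le hd2 (hball q hq)
      apply ContinuousOn.sub continuousOn_const
      apply ContinuousOn.div_const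
      fun_prop
    · -- norm bound
      intro t ht q hq
      have hqd := hball q hq
      have hqpos : 0 < q := by linarith
      have h4 := htrange t ht
      rw [Real.norm_eq_abs]
      unfold Fv
      have hdiv : |t * (1 - t) / q| ≤ 8 / d := by
        rw [abs_div, abs_of_pos hqpos]
        calc |t * (1 - t)| / q ≤ 4 / (d / 2) :=
              div_le_div₀ (by positivity) h4 (by positivity) hqd
          _ = 8 / d := by field_simp; ring
      calc |s - t * (1 - t) / q| ≤ |s| + |t * (1 - t) / q| := abs_sub _ _
        _ ≤ s + 8 / d := by
            have : |s| = s := abs_of_pos (by linarith)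
            linarith
        _ = C := rfl
    · -- C * max ≤ R
      have hmax : max (t₀ + ε - t₀) (t₀ - (t₀ - ε)) = ε := by
        simp
      show C * max (t₀ + ε - t₀) (t₀ - (t₀ - ε)) ≤ d / 2 - 0
      rw [hmax, sub_zero]
      have hle : ε ≤ d / (2 * C) := by
        rw [hεdef]
        unfold epsStep
        exact min_le_right _ _
      calc C * ε ≤ C * (d / (2 * C)) := by
            apply mul_le_mul_of_nonneg_left hle (le_of_lt hCpos)
        _ = d / 2 := by field_simp
  -- replicate the public wrapper, keeping the membership information
  obtain ⟨α, hα⟩ := ODE.FunSpace.exists_isFixedPt_next hpl (Metric.mem_closedBall_self le_rfl)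
  refine ⟨α.compProj, ?_, ?_, ?_⟩
  · have h0 : α.compProj (t₀' : ℝ) = q₀ := by
      rw [ODE.FunSpace.compProj_val, ← hα, ODE.FunSpace.next_apply₀]
    exact h0
  · intro t ht
    have htIcc : t ∈ Icc (t₀ - ε) (t₀ + ε) := Ioo_subset_Icc_self ht
    have hD : HasDerivWithinAt α.compProj (Fv s t (α.compProj t))
        (Icc (t₀ - ε) (t₀ + ε)) t := by
      apply ODE.hasDerivWithinAt_picard_Icc t₀'.2 hpl.continuousOn_uncurry
        α.continuous_compProj.continuousOn
        (fun _ _ => α.compProj_mem_closedBall hpl.mul_max_le) q₀ htIcc |>.congr_of_mem _ htIcc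
      intro t' ht'
      nth_rw 1 [← hα]
      rw [ODE.FunSpace.compProj_of_mem ht', ODE.FunSpace.next_apply]
    exact hD.hasDerivAt (Icc_mem_nhds ht.1 ht.2)
  · intro t ht
    exact α.compProj_mem_closedBall hpl.mul_max_le

/-! Uniqueness wrappers via Grönwall, using a time-clamped field which is
uniformly Lipschitz on `Ici d`. -/

noncomputable def clampF (s l r t q : ℝ) : ℝ := Fv s (max l (min r t)) q


lemma clampF_eq {s l r t q : ℝ} (ht : t ∈ Icc l r) : clampF s l r t q = Fv s t q := by
  unfold clampF
  rw [min_eq_right ht.2, max_eq_right ht.1]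

lemma clampF_lipschitz {s l r d : ℝ} (h0 : 0 ≤ l) (hr : r ≤ 1) (hlr : l ≤ r) (hd : 0 < d)
    (t : ℝ) : LipschitzOnWith ⟨1 / d ^ 2, by positivity⟩ (fun q => clampF s l r t q) (Ici d) := by
  apply LipschitzOnWith.of_dist_le_mul
  intro x hx y hy
  have hx' : d ≤ x := hx
  have hy' : d ≤ y := hy
  have hxpos : 0 < x := lt_of_lt_of_le hd hx'
  have hypos : 0 < y := lt_of_lt_of_le hd hy'
  set c : ℝ := max l (min r t) with hc
  have hc0 : 0 ≤ c := le_trans h0 (le_max_left _ _)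
  have hc1 : c ≤ 1 := by
    apply max_le (le_trans hlr hr)
    exact le_trans (min_le_left _ _) hr
  have hcc : |c * (1 - c)| ≤ 1 / 4 := by
    rw [abs_of_nonneg (by nlinarith)]
    nlinarith [sq_nonneg (c - 1/2)]
  rw [Real.dist_eq, Real.dist_eq]
  have hFxy : clampF s l r t x - clampF s l r t y = c * (1 - c) * (x - y) / (x * y) := by
    unfold clampF Fv
    rw [← hc]
    field_simp
    ring
  rw [hFxy, abs_div, abs_mul]
  have habs : |x * y| = x * y := abs_of_pos (by positivity)
  rw [habs]
  show _ ≤ (1 / d ^ 2) * _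
  have hxy : d * d ≤ x * y := by nlinarith
  calc |c * (1 - c)| * |x - y| / (x * y) ≤ 1 / 4 * |x - y| / (d * d) := by
        apply div_le_div₀ (by positivity) (by nlinarith [abs_nonneg (x - y)]) (by positivity) hxy
    _ ≤ 1 / d ^ 2 * |x - y| := by
        rw [show (1:ℝ) / d ^ 2 * |x - y| = |x - y| / (d * d) from by
          rw [show d * d = d ^ 2 from by ring]; ring]
        apply div_le_div_of_nonneg_right ?_ (by positivity)
        linarith [abs_nonneg (x - y)]

lemma uniq_right {s l r d : ℝ} (h0 : 0 ≤ l) (hr : r ≤ 1) (hlr : l ≤ r) (hd : 0 < d)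
    {f g : ℝ → ℝ}
    (hfc : ContinuousOn f (Icc l r)) (hf' : ∀ t ∈ Ico l r, HasDerivAt f (Fv s t (f t)) t)
    (hfm : ∀ t ∈ Ico l r, d ≤ f t)
    (hgc : ContinuousOn g (Icc l r)) (hg' : ∀ t ∈ Ico l r, HasDerivAt g (Fv s t (g t)) t)
    (hgm : ∀ t ∈ Ico l r, d ≤ g t)
    (heq : f l = g l) : EqOn f g (Icc l r) := by
  apply ODE_solution_unique_of_mem_Icc_right
    (v := fun t q => clampF s l r t q) (s := fun _ => Ici d)
    (K := ⟨1 / d ^ 2, by positivity⟩)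
    (fun t _ => clampF_lipschitz h0 hr hlr hd t)
    hfc ?_ (fun t ht => hfm t ht) hgc ?_ (fun t ht => hgm t ht) heq
  · intro t ht
    have := clampF_eq (s := s) (q := f t) (Ico_subset_Icc_self ht)
    simp only [this]
    exact (hf' t ht).hasDerivWithinAt
  · intro t ht
    have := clampF_eq (s := s) (q := g t) (Ico_subset_Icc_self ht)
    simp only [this]
    exact (hg' t ht).hasDerivWithinAt

lemma uniq_left {s l r d : ℝ} (h0 : 0 ≤ l) (hr : r ≤ 1) (hlr : l ≤ r) (hd : 0 < d)
    {f g : ℝ → ℝ}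
    (hfc : ContinuousOn f (Icc l r))
    (hf' : ∀ t ∈ Ioc l r, HasDerivWithinAt f (Fv s t (f t)) (Iic t) t)
    (hfm : ∀ t ∈ Ioc l r, d ≤ f t)
    (hgc : ContinuousOn g (Icc l r))
    (hg' : ∀ t ∈ Ioc l r, HasDerivWithinAt g (Fv s t (g t)) (Iic t) t)
    (hgm : ∀ t ∈ Ioc l r, d ≤ g t)
    (heq : f r = g r) : EqOn f g (Icc l r) := by
  apply ODE_solution_unique_of_mem_Icc_left
    (v := fun t q => clampF s l r t q) (s := fun _ => Ici d)
    (K := ⟨1 / d ^ 2, by positivity⟩)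
    (fun t _ => clampF_lipschitz h0 hr hlr hd t)
    hfc ?_ (fun t ht => hfm t ht) hgc ?_ (fun t ht => hgm t ht) heq
  · intro t ht
    have := clampF_eq (s := s) (q := f t) (Ioc_subset_Icc_self ht)
    simp only [this]
    exact hf' t ht
  · intro t ht
    have := clampF_eq (s := s) (q := g t) (Ioc_subset_Icc_self ht)
    simp only [this]
    exact hg' t ht

/-! The barrier invariance lemma: a solution of `q' = Fv s t q` ending at the
upper barrier at time `a` stays strictly between the barriers for `t < a`. -/

lemma invariance {s β a : ℝ} (hs : 2 ≤ s) (hβ : 0 < β) (ha : a < 1) (hβa : β < a)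
    {f : ℝ → ℝ}
    (hfa : f a = Mup s a)
    (hf : ∀ t ∈ Ico β a, HasDerivAt f (Fv s t (f t)) t)
    (hfa' : HasDerivWithinAt f (Fv s a (f a)) (Iic a) a) :
    ∀ u ∈ Ico β a, mlow s u < f u ∧ f u < Mup s u := by
  have hspos : (0:ℝ) < s := by linarith
  have haβ0 : 0 < a := lt_trans hβ hβa
  have hcont : ContinuousOn f (Icc β a) := by
    intro t ht
    rcases lt_or_eq_of_le ht.2 with h | h
    · exact ((hf t ⟨ht.1, h⟩).continuousAt).continuousWithinAt
    · subst h
      exact hfa'.continuousWithinAt.mono (fun x hx => hx.2)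
  -- upper barrier
  have hupper : ∀ u ∈ Ico β a, f u < Mup s u := by
    by_contra hcon
    push_neg at hcon
    obtain ⟨u₀, hu₀, hu₀ge⟩ := hcon
    set h : ℝ → ℝ := fun u => f u - Mup s u with hh
    have h_a0 : h a = 0 := by simp [hh, hfa]
    set S : Set ℝ := {u | u ∈ Ico β a ∧ 0 ≤ h u} with hS
    have hne : S.Nonempty := ⟨u₀, hu₀, by simp only [hh]; linarith⟩
    have hbdd : BddAbove S := ⟨a, fun x hx => le_of_lt hx.1.2⟩
    set u' : ℝ := sSup S with hu'
    have hlub : IsLUB S u' := isLUB_csSup hne hbdd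
    -- near a, h < 0
    have hDa : HasDerivWithinAt h (Fv s a (Mup s a) - s / 2 * (1 - 2 * a)) (Iic a) a := by
      have := hfa'.sub (hasDerivAt_Mup s a).hasDerivWithinAt
      rwa [hfa] at this
    have hDapos : 0 < Fv s a (Mup s a) - s / 2 * (1 - 2 * a) := by
      rw [Fv_Mup hs haβ0 ha]
      have h1 : 2 / s ≤ s / 2 := by
        rw [div_le_div_iff₀ (by linarith) (by norm_num)]
        nlinarith
      nlinarith
    have hnear : ∀ᶠ x in 𝓝[<] a, h x < 0 := eventually_neg_left hDa hDapos h_a0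
    obtain ⟨c, hc, hsub⟩ := mem_nhdsLT_iff_exists_Ioo_subset.1 hnear
    have hu'c : u' ≤ c := by
      apply csSup_le hne
      intro x hx
      by_contra hxc
      push_neg at hxc
      have hmem : x ∈ Ioo c a := ⟨hxc, hx.1.2⟩
      have := hsub hmem
      simp only [mem_setOf_eq] at this
      linarith [hx.2]
    have hu'a : u' < a := lt_of_le_of_lt hu'c hc
    -- u' is in the closed set and h u' ≥ 0
    have hclosed : IsClosed (Icc β a ∩ h ⁻¹' Ici 0) := by
      apply ContinuousOn.preimage_isClosed_of_isClosed _ isClosed_Icc isClosed_Ici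
      exact hcont.sub (Continuous.continuousOn (by unfold Mup; fun_prop))
    have hsubset : S ⊆ Icc β a ∩ h ⁻¹' Ici 0 := by
      intro x hx
      exact ⟨Ico_subset_Icc_self hx.1, hx.2⟩
    have hu'mem : u' ∈ Icc β a ∩ h ⁻¹' Ici 0 :=
      closure_minimal hsubset hclosed (hlub.mem_closure hne)
    have hu'β : β ≤ u' := hu'mem.1.1
    have hu'Ico : u' ∈ Ico β a := ⟨hu'β, hu'a⟩
    have hh0ge : 0 ≤ h u' := hu'mem.2
    -- key contradiction device
    have key : ¬ (∀ᶠ x in 𝓝[>] u', 0 < h x) := by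
      intro hev
      have hev2 : ∀ᶠ x in 𝓝[>] u', x < a := by
        filter_upwards [Ioo_mem_nhdsGT_of_mem ⟨le_refl u', hu'a⟩] with x hx
        exact hx.2
      obtain ⟨x, hx1, hx2, hx3⟩ := (hev.and (hev2.and self_mem_nhdsWithin)).exists
      have : x ∈ S := ⟨⟨le_trans hu'β (le_of_lt hx3), hx2⟩, le_of_lt hx1⟩
      have := hlub.1 this
      exact absurd hx3 (not_lt.2 this)
    -- h u' ≤ 0
    have hh0le : h u' ≤ 0 := by
      by_contra hpos
      push_neg at hpos
      have hca : ContinuousAt h u' :=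
        ((hf u' hu'Ico).continuousAt).sub (hasDerivAt_Mup s u').continuousAt
      exact key (hca.eventually (eventually_gt_nhds hpos) |>.filter_mono nhdsWithin_le_nhds)
    have hh0 : h u' = 0 := le_antisymm hh0le hh0ge
    have hfu' : f u' = Mup s u' := by
      have := sub_eq_zero.1 hh0
      exact this
    have hD : HasDerivAt h (Fv s u' (f u') - s / 2 * (1 - 2 * u')) u' :=
      (hf u' hu'Ico).sub (hasDerivAt_Mup s u')
    have hDpos : 0 < Fv s u' (f u') - s / 2 * (1 - 2 * u') := by
      rw [hfu', Fv_Mup hs (lt_of_lt_of_le hβ hu'β) (lt_trans hu'a ha)]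
      have h1 : 2 / s ≤ s / 2 := by
        rw [div_le_div_iff₀ (by linarith) (by norm_num)]
        nlinarith
      have : 0 < u' := lt_of_lt_of_le hβ hu'β
      nlinarith
    exact key (eventually_pos_right hD.hasDerivWithinAt hDpos hh0)
  -- lower barrier
  have hlower : ∀ u ∈ Ico β a, mlow s u < f u := by
    by_contra hcon
    push_neg at hcon
    obtain ⟨u₀, hu₀, hu₀le⟩ := hcon
    set g : ℝ → ℝ := fun u => f u - mlow s u with hg
    have hga : 0 < g a := by
      simp only [hg, hfa]
      have := mlow_lt_Mup (u := a) hs haβ0 ha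
      linarith
    set S : Set ℝ := {u | u ∈ Ico β a ∧ g u ≤ 0} with hS
    have hne : S.Nonempty := ⟨u₀, hu₀, by simp only [hg]; linarith⟩
    have hbdd : BddAbove S := ⟨a, fun x hx => le_of_lt hx.1.2⟩
    set u' : ℝ := sSup S with hu'
    have hlub : IsLUB S u' := isLUB_csSup hne hbdd
    have hclosed : IsClosed (Icc β a ∩ g ⁻¹' Iic 0) := by
      apply ContinuousOn.preimage_isClosed_of_isClosed _ isClosed_Icc isClosed_Iic
      exact hcont.sub (Continuous.continuousOn (by unfold mlow; fun_prop))
    have hsubset : S ⊆ Icc β a ∩ g ⁻¹' Iic 0 := by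
      intro x hx
      exact ⟨Ico_subset_Icc_self hx.1, hx.2⟩
    have hu'mem : u' ∈ Icc β a ∩ g ⁻¹' Iic 0 :=
      closure_minimal hsubset hclosed (hlub.mem_closure hne)
    have hu'β : β ≤ u' := hu'mem.1.1
    have hg0le : g u' ≤ 0 := hu'mem.2
    have hu'a : u' < a := by
      rcases lt_or_eq_of_le hu'mem.1.2 with h | h
      · exact h
      · exfalso; rw [h] at hg0le; linarith
    have hu'Ico : u' ∈ Ico β a := ⟨hu'β, hu'a⟩
    have key : ¬ (∀ᶠ x in 𝓝[>] u', g x < 0) := by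
      intro hev
      have hev2 : ∀ᶠ x in 𝓝[>] u', x < a := by
        filter_upwards [Ioo_mem_nhdsGT_of_mem ⟨le_refl u', hu'a⟩] with x hx
        exact hx.2
      obtain ⟨x, hx1, hx2, hx3⟩ := (hev.and (hev2.and self_mem_nhdsWithin)).exists
      have : x ∈ S := ⟨⟨le_trans hu'β (le_of_lt hx3), hx2⟩, le_of_lt hx1⟩
      have := hlub.1 this
      exact absurd hx3 (not_lt.2 this)
    have hg0ge : 0 ≤ g u' := by
      by_contra hneg
      push_neg at hneg
      have hca : ContinuousAt g u' :=
        ((hf u' hu'Ico).continuousAt).sub (hasDerivAt_mlow s u').continuousAt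
      exact key (hca.eventually (eventually_lt_nhds hneg) |>.filter_mono nhdsWithin_le_nhds)
    have hg0 : g u' = 0 := le_antisymm hg0le hg0ge
    have hfu' : f u' = mlow s u' := sub_eq_zero.1 hg0
    have hD : HasDerivAt g (Fv s u' (f u') - lam s * (1 - 2 * u')) u' :=
      (hf u' hu'Ico).sub (hasDerivAt_mlow s u')
    have hDneg : Fv s u' (f u') - lam s * (1 - 2 * u') < 0 := by
      rw [hfu', Fv_mlow hs (lt_of_lt_of_le hβ hu'β) (lt_trans hu'a ha)]
      have hlam := lam_pos hs
      have : u' < 1 := lt_trans hu'a ha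
      nlinarith
    exact key (eventually_neg_right hD.hasDerivWithinAt hDneg hg0)
  exact fun u hu => ⟨hlower u hu, hupper u hu⟩

/-- Solution predicate on `[β, a]` with terminal value on the upper barrier. -/
def IsSolOn (s : ℝ) (f : ℝ → ℝ) (β a : ℝ) : Prop :=
  f a = Mup s a ∧ (∀ t ∈ Ico β a, HasDerivAt f (Fv s t (f t)) t) ∧
    HasDerivWithinAt f (Fv s a (f a)) (Iic a) a

lemma IsSolOn.mono {s : ℝ} {f : ℝ → ℝ} {β β' a : ℝ} (h : IsSolOn s f β a) (hβ : β ≤ β') :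
    IsSolOn s f β' a :=
  ⟨h.1, fun t ht => h.2.1 t ⟨le_trans hβ ht.1, ht.2⟩, h.2.2⟩

lemma sol_cont {s : ℝ} {f : ℝ → ℝ} {β a : ℝ} (h : IsSolOn s f β a) :
    ContinuousOn f (Icc β a) := by
  intro t ht
  rcases lt_or_eq_of_le ht.2 with hlt | heq
  · exact ((h.2.1 t ⟨ht.1, hlt⟩).continuousAt).continuousWithinAt
  · subst heq
    exact h.2.2.continuousWithinAt.mono (fun x hx => hx.2)

lemma quad_min {α a u : ℝ} (hα : 0 < α) (hu1 : α ≤ u) (hu2 : u ≤ a) (ha : a < 1) :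
    min (α * (1 - α)) (a * (1 - a)) ≤ u * (1 - u) := by
  rcases le_or_gt u (1 - α) with h | h
  · calc min (α * (1 - α)) (a * (1 - a)) ≤ α * (1 - α) := min_le_left _ _
      _ ≤ u * (1 - u) := by nlinarith
  · calc min (α * (1 - α)) (a * (1 - a)) ≤ a * (1 - a) := min_le_right _ _
      _ ≤ u * (1 - u) := by nlinarith

lemma mlow_ge {s α a u : ℝ} (hs : 2 ≤ s) (hα : 0 < α) (hu1 : α ≤ u) (hu2 : u ≤ a)
    (ha : a < 1) : lam s * min (α * (1 - α)) (a * (1 - a)) ≤ mlow s u := by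
  have := lam_pos hs
  have := quad_min hα hu1 hu2 ha
  unfold mlow
  nlinarith

/-- Continuation: a solution exists on every interval `[α, a]`. -/
lemma sol_extend {s α a : ℝ} (hs : 2 ≤ s) (hα : 0 < α) (ha : a < 1) (hαa : α < a) :
    ∃ f, IsSolOn s f α a := by
  have ha0 : 0 < a := lt_trans hα hαa
  set d : ℝ := lam s * min (α * (1 - α)) (a * (1 - a)) with hd_def
  have hd : 0 < d := by
    have h1 := lam_pos hs
    have h2 : 0 < α * (1 - α) := by nlinarith
    have h3 : 0 < a * (1 - a) := by nlinarith
    have := lt_min h2 h3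
    positivity
  set ε : ℝ := epsStep s d with hε_def
  have hε : 0 < ε := epsStep_pos hs hd
  have haIcc : a ∈ Icc (0:ℝ) 1 := ⟨le_of_lt ha0, le_of_lt ha⟩
  have hdM : d ≤ Mup s a := by
    calc d ≤ mlow s a := mlow_ge hs hα (le_of_lt hαa) (le_refl a) ha
      _ ≤ Mup s a := le_of_lt (mlow_lt_Mup hs ha0 ha)
  -- the inductive claim
  have claim : ∀ k : ℕ, ∃ f, IsSolOn s f (max α (a - ε / 2 * (k + 1))) a := by
    intro k
    induction k with
    | zero =>
      obtain ⟨f, hf0, hf1, -⟩ := localSol hs hd haIcc hdM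
      rw [← hε_def] at hf1
      refine ⟨f, hf0, ?_, ?_⟩
      · intro t ht
        have ht1 : a - ε / 2 * ((0:ℕ) + 1) ≤ t := le_trans (le_max_right _ _) ht.1
        push_cast at ht1
        apply hf1 t
        exact ⟨by linarith, by linarith [ht.2]⟩
      · exact (hf1 a ⟨by linarith, by linarith⟩).hasDerivWithinAt
    | succ k ih =>
      obtain ⟨f, hf⟩ := ih
      rcases le_or_gt (a - ε / 2 * (k + 1)) α with hcase | hcase
      · -- already reached α
        refine ⟨f, hf.mono ?_⟩
        rw [max_eq_left hcase]
        exact le_max_left _ _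
      · -- extend one more step
        set β : ℝ := max α (a - ε / 2 * (k + 1)) with hβ_def
        have hβ_eq : β = a - ε / 2 * (k + 1) := max_eq_right (le_of_lt hcase)
        have hβα : α < β := by rw [hβ_eq]; exact hcase
        have hβ0 : 0 < β := lt_trans hα hβα
        have hβa : β < a := by
          rw [hβ_eq]
          have hk1 : (0:ℝ) < (k:ℝ) + 1 := by positivity
          nlinarith
        have hinv := invariance hs hβ0 ha hβa hf.1 hf.2.1 hf.2.2
        have hβmem : β ∈ Ico β a := ⟨le_refl β, hβa⟩
        have hfβ_low := (hinv β hβmem).1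
        have hdfβ : d ≤ f β :=
          le_trans (mlow_ge hs hα (le_of_lt hβα) (le_of_lt hβa) ha) (le_of_lt hfβ_low)
        have hβIcc : β ∈ Icc (0:ℝ) 1 := ⟨le_of_lt hβ0, by linarith⟩
        obtain ⟨g, hg0, hg1, hg2⟩ := localSol hs hd hβIcc hdfβ
        rw [← hε_def] at hg1 hg2
        set r : ℝ := min (β + ε / 2) a with hr_def
        have hβr : β < r := lt_min (by linarith) hβa
        have hra : r ≤ a := min_le_right _ _
        have hrε : r < β + ε := lt_of_le_of_lt (min_le_left _ _) (by linarith)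
        -- g agrees with f on [β, r]
        have hagree : EqOn f g (Icc β r) := by
          apply uniq_right (d := d / 2) (le_of_lt hβ0) (by linarith) (le_of_lt hβr)
            (by linarith)
          · exact (sol_cont hf).mono (Icc_subset_Icc_right hra)
          · intro t ht
            exact hf.2.1 t ⟨ht.1, lt_of_lt_of_le ht.2 hra⟩
          · intro t ht
            have h1 := (hinv t ⟨ht.1, lt_of_lt_of_le ht.2 hra⟩).1
            have hm := mlow_ge hs hα (le_trans (le_of_lt hβα) ht.1)
              (le_of_lt (lt_of_lt_of_le ht.2 hra)) ha
            linarith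
          · intro t ht
            exact ((hg1 t ⟨by linarith [ht.1], by linarith [ht.2, hrε]⟩).continuousAt).continuousWithinAt
          · intro t ht
            exact hg1 t ⟨by linarith [ht.1], by linarith [ht.2, hrε]⟩
          · intro t ht
            have hmem := hg2 t ⟨by linarith [ht.1], by linarith [ht.2, hrε]⟩
            rw [Metric.mem_closedBall, Real.dist_eq, abs_le] at hmem
            linarith [hmem.1]
          · exact hg0.symm
        -- glued function
        set F : ℝ → ℝ := fun t => if β ≤ t then f t else g t with hF_def
        have hFf : ∀ t, β ≤ t → F t = f t := by
          intro t ht; simp only [hF_def, if_pos ht]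
        have hFg : ∀ t, t < r → F t = g t := by
          intro t ht
          rcases le_or_gt β t with h | h
          · simp only [hF_def, if_pos h]
            exact hagree ⟨h, le_of_lt ht⟩
          · simp only [hF_def, if_neg (not_le.2 h)]
        refine ⟨F, ?_, ?_, ?_⟩
        · rw [hFf a (le_of_lt hβa)]; exact hf.1
        · intro t ht
          have hts : a - ε / 2 * ((k:ℝ) + 2) ≤ t := by
            have h := le_trans (le_max_right _ _) ht.1
            push_cast at h
            linarith
          have htβε : β - ε / 2 ≤ t := by rw [hβ_eq]; linarith
          rcases lt_or_ge t r with hlt | hge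
          · -- use g
            have hgd : HasDerivAt g (Fv s t (g t)) t :=
              hg1 t ⟨by linarith, by linarith [hrε]⟩
            have hev : F =ᶠ[𝓝 t] g := by
              filter_upwards [Iio_mem_nhds hlt] with x hx
              exact hFg x hx
            have hFt : F t = g t := hFg t hlt
            rw [hFt]
            exact hgd.congr_of_eventuallyEq hev
          · -- use f
            have htβ : β < t := lt_of_lt_of_le hβr hge
            have hfd : HasDerivAt f (Fv s t (f t)) t := hf.2.1 t ⟨le_of_lt htβ, ht.2⟩
            have hev : F =ᶠ[𝓝 t] f := by
              filter_upwards [Ioi_mem_nhds htβ] with x hx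
              exact hFf x (le_of_lt hx)
            have hFt : F t = f t := hFf t (le_of_lt htβ)
            rw [hFt]
            exact hfd.congr_of_eventuallyEq hev
        · -- derivative within Iic at a
          have hev : F =ᶠ[𝓝[Set.Iic a] a] f := by
            filter_upwards [Icc_mem_nhdsLE_of_mem ⟨hβa, le_refl a⟩] with x hx
            exact hFf x hx.1
          have hFa : F a = f a := hFf a (le_of_lt hβa)
          rw [hFa]
          exact hf.2.2.congr_of_eventuallyEq hev hFa
  -- pick k large enough
  obtain ⟨k, hk⟩ := exists_nat_gt ((a - α) / (ε / 2))
  obtain ⟨f, hf⟩ := claim k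
  refine ⟨f, hf.mono ?_⟩
  have hle : a - ε / 2 * (k + 1) ≤ α := by
    rw [div_lt_iff₀ (by positivity)] at hk
    nlinarith
  rw [max_eq_left hle]



/-- A single solution on all of `(0, a]`, trapped between the barriers. -/
lemma sol_global {s a : ℝ} (hs : 2 ≤ s) (ha0 : 0 < a) (ha : a < 1) :
    ∃ f : ℝ → ℝ, f a = Mup s a ∧ (∀ t ∈ Ioo 0 a, HasDerivAt f (Fv s t (f t)) t) ∧
      HasDerivWithinAt f (Fv s a (f a)) (Iic a) a ∧
      (∀ t ∈ Ioo 0 a, mlow s t < f t ∧ f t < Mup s t) := by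
  -- the family of solutions
  set α : ℕ → ℝ := fun k => a / ((k : ℝ) + 2) with hα_def
  have hαpos : ∀ k, 0 < α k := fun k => by positivity
  have hαlt : ∀ k, α k < a := by
    intro k
    rw [hα_def]
    rw [div_lt_iff₀ (by positivity)]
    nlinarith [(Nat.cast_nonneg k : (0:ℝ) ≤ k)]
  have hex : ∀ k : ℕ, ∃ f, IsSolOn s f (α k) a :=
    fun k => sol_extend hs (hαpos k) ha (hαlt k)
  choose f hf using hex
  have hinv : ∀ k, ∀ t ∈ Ico (α k) a, mlow s t < f k t ∧ f k t < Mup s t :=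
    fun k => invariance hs (hαpos k) ha (hαlt k) (hf k).1 (hf k).2.1 (hf k).2.2
  -- pairwise agreement
  have hagree : ∀ j k : ℕ, ∀ t ∈ Icc (max (α j) (α k)) a, f j t = f k t := by
    intro j k
    set l : ℝ := max (α j) (α k) with hl_def
    have hl0 : 0 < l := lt_of_lt_of_le (hαpos j) (le_max_left _ _)
    have hla : l < a := max_lt (hαlt j) (hαlt k)
    set d : ℝ := lam s * min (l * (1 - l)) (a * (1 - a)) with hd_def
    have hd : 0 < d := by
      have h1 := lam_pos hs
      have h2 : 0 < l * (1 - l) := by nlinarith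
      have h3 : 0 < a * (1 - a) := by nlinarith
      have := lt_min h2 h3
      positivity
    have hside : ∀ i : ℕ, α i ≤ l → (∀ t ∈ Ioc l a,
        HasDerivWithinAt (f i) (Fv s t (f i t)) (Iic t) t) ∧ (∀ t ∈ Ioc l a, d ≤ f i t) := by
      intro i hi
      constructor
      · intro t ht
        rcases lt_or_eq_of_le ht.2 with hlt | heq
        · exact ((hf i).2.1 t ⟨le_trans hi (le_of_lt ht.1), hlt⟩).hasDerivWithinAt
        · subst heq
          exact (hf i).2.2
      · intro t ht
        have hm : d ≤ mlow s t := mlow_ge hs hl0 (le_of_lt ht.1) ht.2 ha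
        rcases lt_or_eq_of_le ht.2 with hlt | heq
        · have := (hinv i t ⟨le_trans hi (le_of_lt ht.1), hlt⟩).1
          linarith
        · subst heq
          rw [(hf i).1]
          have := mlow_lt_Mup (u := t) hs ha0 ha
          linarith
    have hj := hside j (le_max_left _ _)
    have hk := hside k (le_max_right _ _)
    exact uniq_left (s := s) (le_of_lt hl0) (le_of_lt ha) (le_of_lt hla) hd
      ((sol_cont (hf j)).mono (Icc_subset_Icc_left (le_max_left _ _)))
      hj.1 hj.2
      ((sol_cont (hf k)).mono (Icc_subset_Icc_left (le_max_right _ _)))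
      hk.1 hk.2
      (by rw [(hf j).1, (hf k).1])
  -- the glued function
  set K : ℝ → ℕ := fun t => ⌈a / t⌉₊ with hK_def
  have hK : ∀ t : ℝ, 0 < t → α (K t) < t := by
    intro t ht
    have h1 : a / t ≤ (K t : ℝ) := Nat.le_ceil _
    rw [hα_def]
    rw [div_lt_iff₀ (by positivity)]
    have h2 : a = (a / t) * t := by field_simp
    calc a = (a / t) * t := h2
      _ ≤ (K t : ℝ) * t := by nlinarith
      _ < t * ((K t : ℝ) + 2) := by nlinarith [(Nat.cast_nonneg (K t) : (0:ℝ) ≤ K t)]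
  set p : ℝ → ℝ := fun t => f (K t) t with hp_def
  have hp_eq : ∀ k : ℕ, ∀ t, t ∈ Ioc (α k) a → p t = f k t := by
    intro k t ht
    have ht0 : 0 < t := lt_trans (hαpos k) ht.1
    exact hagree (K t) k t ⟨max_le (le_of_lt (hK t ht0)) (le_of_lt ht.1), ht.2⟩
  have hpa : p a = Mup s a := by
    have := hp_eq (K a) a ⟨hK a ha0, le_refl a⟩
    rw [this, (hf (K a)).1]
  refine ⟨p, hpa, ?_, ?_, ?_⟩
  · intro t ht
    set k : ℕ := K t with hk_def
    have hαt : α k < t := hK t ht.1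
    have hd : HasDerivAt (f k) (Fv s t (f k t)) t := (hf k).2.1 t ⟨le_of_lt hαt, ht.2⟩
    have hev : p =ᶠ[𝓝 t] f k := by
      filter_upwards [Ioo_mem_nhds hαt ht.2] with x hx
      exact hp_eq k x ⟨hx.1, le_of_lt hx.2⟩
    have hpt : p t = f k t := hp_eq k t ⟨hαt, le_of_lt ht.2⟩
    rw [hpt]
    exact hd.congr_of_eventuallyEq hev
  · set k : ℕ := K a with hk_def
    have hαa2 : α k < a := hK a ha0
    have hev : p =ᶠ[𝓝[Set.Iic a] a] f k := by
      filter_upwards [Ioc_mem_nhdsLE_of_mem ⟨hαa2, le_refl a⟩] with x hx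
      exact hp_eq k x hx
    have hpa2 : p a = f k a := hp_eq k a ⟨hαa2, le_refl a⟩
    rw [hpa2]
    exact (hf k).2.2.congr_of_eventuallyEq hev hpa2
  · intro t ht
    have hαt : α (K t) < t := hK t ht.1
    have := hinv (K t) t ⟨le_of_lt hαt, ht.2⟩
    exact this

/-- uniform bound for the field in the trapped region -/
lemma Fv_bound {s t q : ℝ} (hs : 2 ≤ s) (ht : 0 < t) (ht1 : t < 1)
    (hq : mlow s t ≤ q) : |Fv s t q| ≤ s + (lam s)⁻¹ := by
  have hl := lam_pos hs
  have htt : 0 < t * (1 - t) := by nlinarith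
  have hq0 : 0 < q := lt_of_lt_of_le (mlow_pos hs ht ht1) hq
  have h1 : 0 ≤ t * (1 - t) / q := by positivity
  have h2 : t * (1 - t) / q ≤ (lam s)⁻¹ := by
    rw [div_le_iff₀ hq0]
    have : mlow s t ≤ q := hq
    unfold mlow at this
    calc t * (1 - t) = (lam s)⁻¹ * (lam s * (t * (1 - t))) := by field_simp
      _ ≤ (lam s)⁻¹ * q := by
          apply mul_le_mul_of_nonneg_left this (by positivity)
  unfold Fv
  rw [abs_le]
  constructor
  · have : (lam s)⁻¹ > 0 := by positivity
    linarith
  · linarith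

/-- The heteroclinic trajectory `p` of `p' = Fv s t p` on `(0,1)`. -/
lemma exists_p {s : ℝ} (hs : 2 ≤ s) :
    ∃ p : ℝ → ℝ, (∀ t ∈ Ioo (0:ℝ) 1, HasDerivAt p (Fv s t (p t)) t) ∧
      (∀ t ∈ Ioo (0:ℝ) 1, mlow s t ≤ p t ∧ p t ≤ Mup s t) := by
  have hl := lam_pos hs
  -- the sequence of terminal points
  set aseq : ℕ → ℝ := fun n => 1 - 1 / ((n : ℝ) + 2) with ha_def
  have ha_pos : ∀ n, 0 < aseq n := by
    intro n
    have h2 : (0:ℝ) < (n:ℝ) + 2 := by positivity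
    have : 1 / ((n:ℝ) + 2) ≤ 1 / 2 := by
      apply div_le_div_of_nonneg_left (by norm_num) (by norm_num)
      · nlinarith [(Nat.cast_nonneg n : (0:ℝ) ≤ n)]
    simp only [ha_def]
    linarith
  have ha_lt1 : ∀ n, aseq n < 1 := by
    intro n
    have h2 : (0:ℝ) < 1 / ((n:ℝ) + 2) := by positivity
    simp only [ha_def]
    linarith
  have ha_mono : ∀ n m : ℕ, n < m → aseq n < aseq m := by
    intro n m hnm
    have h1 : (n:ℝ) < (m:ℝ) := by exact_mod_cast hnm
    have h2 : (0:ℝ) < (n:ℝ) + 2 := by positivity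
    have h3 : (0:ℝ) < (m:ℝ) + 2 := by positivity
    have : 1 / ((m:ℝ) + 2) < 1 / ((n:ℝ) + 2) := by
      apply div_lt_div_of_pos_left (by norm_num) h2 (by linarith)
    simp only [ha_def]
    linarith
  have ha_tend : ∀ y < 1, ∃ N : ℕ, ∀ n ≥ N, y < aseq n := by
    intro y hy
    obtain ⟨N, hN⟩ := exists_nat_gt (1 / (1 - y))
    refine ⟨N, fun n hn => ?_⟩
    have h1 : (1:ℝ) / (1 - y) < (N:ℝ) := hN
    have h2 : (N:ℝ) ≤ (n:ℝ) := by exact_mod_cast hn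
    have h3 : (0:ℝ) < 1 - y := by linarith
    have h4 : (0:ℝ) < (n:ℝ) + 2 := by positivity
    have h5 : 1 / (1 - y) < (n:ℝ) + 2 := by linarith
    have h6 : 1 / ((n:ℝ) + 2) < 1 - y := by
      rw [div_lt_iff₀ h4]
      rw [div_lt_iff₀ h3] at h5
      nlinarith
    simp only [ha_def]
    linarith
  -- the solutions
  have hex : ∀ n : ℕ, ∃ f : ℝ → ℝ, f (aseq n) = Mup s (aseq n) ∧
      (∀ t ∈ Ioo 0 (aseq n), HasDerivAt f (Fv s t (f t)) t) ∧
      HasDerivWithinAt f (Fv s (aseq n) (f (aseq n))) (Iic (aseq n)) (aseq n) ∧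
      (∀ t ∈ Ioo 0 (aseq n), mlow s t < f t ∧ f t < Mup s t) :=
    fun n => sol_global hs (ha_pos n) (ha_lt1 n)
  choose P hP0 hP1 hP2 hP3 using hex
  -- continuity of each P n on Icc x (aseq n) for 0 < x
  have hPcont : ∀ n, ∀ x, 0 < x → x ≤ aseq n → ContinuousOn (P n) (Icc x (aseq n)) := by
    intro n x hx hxa t ht
    rcases lt_or_eq_of_le ht.2 with hlt | heq
    · exact ((hP1 n t ⟨lt_of_lt_of_le hx ht.1, hlt⟩).continuousAt).continuousWithinAt
    · subst heq
      exact (hP2 n).continuousWithinAt.mono (fun z hz => hz.2)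
  -- comparison
  have hcomp : ∀ n m : ℕ, n < m → ∀ t, 0 < t → t ≤ aseq n → P m t ≤ P n t := by
    intro n m hnm t ht hta
    by_contra hcon
    push_neg at hcon
    set h : ℝ → ℝ := fun x => P n x - P m x with hh_def
    have hanm := ha_mono n m hnm
    have hIcc_sub : Icc t (aseq n) ⊆ Ioo 0 (aseq m) :=
      fun z hz => ⟨lt_of_lt_of_le ht hz.1, lt_of_le_of_lt hz.2 hanm⟩
    have hcont : ContinuousOn h (Icc t (aseq n)) := by
      apply ContinuousOn.sub (hPcont n t ht hta)
      intro z hz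
      exact ((hP1 m z (hIcc_sub hz)).continuousAt).continuousWithinAt
    have hht : h t < 0 := by simp only [hh_def]; linarith
    have hha : 0 < h (aseq n) := by
      simp only [hh_def, hP0 n]
      have := (hP3 m (aseq n) ⟨ha_pos n, hanm⟩).2
      linarith
    have h0mem : (0:ℝ) ∈ Icc (h t) (h (aseq n)) := ⟨le_of_lt hht, le_of_lt hha⟩
    obtain ⟨u, hu, hu0⟩ := intermediate_value_Icc hta hcont h0mem
    -- uniqueness from u to aseq n forces equality at aseq n
    have hupos : 0 < u := lt_of_lt_of_le ht hu.1
    have hu1 : u < 1 := lt_of_le_of_lt hu.2 (ha_lt1 n)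
    set d : ℝ := lam s * min (u * (1 - u)) (aseq n * (1 - aseq n)) with hd_def
    have hd : 0 < d := by
      have h2 : 0 < u * (1 - u) := by nlinarith
      have h3 : 0 < aseq n * (1 - aseq n) := by nlinarith [ha_pos n, ha_lt1 n]
      have := lt_min h2 h3
      positivity
    have heqon : EqOn (P n) (P m) (Icc u (aseq n)) := by
      apply uniq_right (d := d) (le_of_lt hupos) (le_of_lt (ha_lt1 n)) hu.2 hd
      · exact (hPcont n u hupos hu.2)
      · intro z hz
        exact hP1 n z ⟨lt_of_lt_of_le hupos hz.1, hz.2⟩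
      · intro z hz
        have hb := (hP3 n z ⟨lt_of_lt_of_le hupos hz.1, hz.2⟩).1
        have hm := mlow_ge hs hupos hz.1 (le_of_lt hz.2) (ha_lt1 n)
        rw [← hd_def] at hm
        linarith
      · exact (hPcont m u hupos (le_trans hu.2 (le_of_lt hanm))).mono
          (Icc_subset_Icc_right (le_of_lt hanm))
      · intro z hz
        exact hP1 m z ⟨lt_of_lt_of_le hupos hz.1, lt_trans hz.2 hanm⟩
      · intro z hz
        have hb := (hP3 m z ⟨lt_of_lt_of_le hupos hz.1, lt_trans hz.2 hanm⟩).1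
        have hm := mlow_ge hs hupos hz.1 (le_of_lt hz.2) (ha_lt1 n)
        rw [← hd_def] at hm
        linarith
      · exact sub_eq_zero.1 hu0
    have := heqon ⟨hu.2, le_refl _⟩
    rw [hP0 n] at this
    have := (hP3 m (aseq n) ⟨ha_pos n, hanm⟩).2
    linarith
  -- the truncated antitone sequence
  set rq : ℕ → ℝ → ℝ := fun n t => if t < aseq n then P n t else Mup s t with hr_def
  have hr_low : ∀ t, 0 < t → t < 1 → ∀ n, mlow s t ≤ rq n t := by
    intro t ht ht1 n
    simp only [hr_def]
    split_ifs with h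
    · exact le_of_lt (hP3 n t ⟨ht, h⟩).1
    · exact le_of_lt (mlow_lt_Mup hs ht ht1)
  have hr_up : ∀ t, 0 < t → t < 1 → ∀ n, rq n t ≤ Mup s t := by
    intro t ht ht1 n
    simp only [hr_def]
    split_ifs with h
    · exact le_of_lt (hP3 n t ⟨ht, h⟩).2
    · exact le_refl _
  have hr_anti : ∀ t, 0 < t → t < 1 → ∀ n, rq (n + 1) t ≤ rq n t := by
    intro t ht ht1 n
    have hmono := ha_mono n (n + 1) (Nat.lt_succ_self n)
    simp only [hr_def]
    split_ifs with h1 h2 h2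
    · exact hcomp n (n + 1) (Nat.lt_succ_self n) t ht (le_of_lt h2)
    · exact le_of_lt (hP3 (n + 1) t ⟨ht, h1⟩).2
    · exact absurd (lt_trans h2 hmono) h1
    · exact le_refl _
  set pinf : ℝ → ℝ := fun t => ⨅ n, rq n t with hp_def
  have hbdd : ∀ t, 0 < t → t < 1 → BddBelow (range fun n => rq n t) := by
    intro t ht ht1
    refine ⟨mlow s t, ?_⟩
    rintro z ⟨n, rfl⟩
    exact hr_low t ht ht1 n
  have htend : ∀ t, 0 < t → t < 1 → Tendsto (fun n => rq n t) atTop (𝓝 (pinf t)) :=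
    fun t ht ht1 => tendsto_atTop_ciInf
      (antitone_nat_of_succ_le (hr_anti t ht ht1)) (hbdd t ht ht1)
  have hpinf_low : ∀ t, 0 < t → t < 1 → mlow s t ≤ pinf t :=
    fun t ht ht1 => le_ciInf (hr_low t ht ht1)
  have hpinf_up : ∀ t, 0 < t → t < 1 → pinf t ≤ Mup s t :=
    fun t ht ht1 => le_trans (ciInf_le (hbdd t ht ht1) 0) (hr_up t ht ht1 0)
  have hpinf_pos : ∀ t, 0 < t → t < 1 → 0 < pinf t :=
    fun t ht ht1 => lt_of_lt_of_le (mlow_pos hs ht ht1) (hpinf_low t ht ht1)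
  have hrP : ∀ t, t < 1 → ∀ᶠ n in atTop, rq n t = P n t := by
    intro t ht1
    obtain ⟨N, hN⟩ := ha_tend t ht1
    filter_upwards [eventually_ge_atTop N] with n hn
    simp only [hr_def, if_pos (hN n hn)]
  have htendP : ∀ t, 0 < t → t < 1 → Tendsto (fun n => P n t) atTop (𝓝 (pinf t)) :=
    fun t ht ht1 => (htend t ht ht1).congr' (hrP t ht1)
  -- the integral identity for the limit
  have hkey : ∀ x y : ℝ, 0 < x → x ≤ y → y < 1 →
      pinf y - pinf x = ∫ t in x..y, Fv s t (pinf t) := by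
    intro x y hx hxy hy
    have hx1 : x < 1 := lt_of_le_of_lt hxy hy
    have hy0 : 0 < y := lt_of_lt_of_le hx hxy
    obtain ⟨N, hN⟩ := ha_tend y hy
    have hsub : ∀ n ≥ N, uIcc x y ⊆ Ioo 0 (aseq n) := by
      intro n hn
      rw [uIcc_of_le hxy]
      exact fun z hz => ⟨lt_of_lt_of_le hx hz.1, lt_of_le_of_lt hz.2 (hN n hn)⟩
    have hFcont : ∀ n ≥ N, ContinuousOn (fun z => Fv s z (P n z)) (uIcc x y) := by
      intro n hn
      have hc : ContinuousOn (P n) (uIcc x y) :=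
        fun z hz => ((hP1 n z (hsub n hn hz)).continuousAt).continuousWithinAt
      apply ContinuousOn.sub continuousOn_const
      apply ContinuousOn.div (by fun_prop) hc
      intro z hz
      have h1 := (hP3 n z (hsub n hn hz)).1
      have h2 := mlow_pos hs (hsub n hn hz).1 (lt_trans (hsub n hn hz).2 (ha_lt1 n))
      exact ne_of_gt (by linarith)
    have hPid : ∀ n ≥ N, P n y - P n x = ∫ t in x..y, Fv s t (P n t) := by
      intro n hn
      rw [intervalIntegral.integral_eq_sub_of_hasDerivAt
        (fun z hz => hP1 n z (hsub n hn hz)) ((hFcont n hn).intervalIntegrable)]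
    have hLHS : Tendsto (fun n => P n y - P n x) atTop (𝓝 (pinf y - pinf x)) :=
      (htendP y hy0 hy).sub (htendP x hx hx1)
    have hLHS' : Tendsto (fun n => ∫ t in x..y, Fv s t (P n t)) atTop
        (𝓝 (pinf y - pinf x)) := by
      apply hLHS.congr'
      filter_upwards [eventually_ge_atTop N] with n hn
      exact hPid n hn
    have hIoc_sub : ∀ z ∈ uIoc x y, z ∈ Ioo (0:ℝ) 1 := by
      intro z hz
      rw [uIoc_of_le hxy] at hz
      exact ⟨lt_trans hx hz.1, lt_of_le_of_lt hz.2 hy⟩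
    have hRHS : Tendsto (fun n => ∫ t in x..y, Fv s t (P n t)) atTop
        (𝓝 (∫ t in x..y, Fv s t (pinf t))) := by
      apply intervalIntegral.tendsto_integral_filter_of_dominated_convergence
        (bound := fun _ => s + (lam s)⁻¹)
      · filter_upwards [eventually_ge_atTop N] with n hn
        exact ((hFcont n hn).mono uIoc_subset_uIcc).aestronglyMeasurable
          measurableSet_uIoc
      · filter_upwards [eventually_ge_atTop N] with n hn
        apply MeasureTheory.ae_of_all
        intro z hz
        have hz01 := hIoc_sub z hz
        have hzn : z ∈ Ioo 0 (aseq n) := hsub n hn (uIoc_subset_uIcc hz)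
        rw [Real.norm_eq_abs]
        exact Fv_bound hs hz01.1 hz01.2 (le_of_lt (hP3 n z hzn).1)
      · exact intervalIntegrable_const
      · apply MeasureTheory.ae_of_all
        intro z hz
        have hz01 := hIoc_sub z hz
        have hq := htendP z hz01.1 hz01.2
        have hne : pinf z ≠ 0 := ne_of_gt (hpinf_pos z hz01.1 hz01.2)
        have hcq : ContinuousAt (fun q => Fv s z q) (pinf z) := by
          unfold Fv
          exact continuousAt_const.sub (continuousAt_const.div continuousAt_id hne)
        exact (hcq.tendsto.comp hq)
    exact tendsto_nhds_unique hLHS' hRHS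
  -- continuity of the limit
  have hLip : ∀ x y : ℝ, x ∈ Ioo (0:ℝ) 1 → y ∈ Ioo (0:ℝ) 1 → x ≤ y →
      |pinf y - pinf x| ≤ (s + (lam s)⁻¹) * |y - x| := by
    intro x y hx hy hxy
    rw [hkey x y hx.1 hxy hy.2]
    rw [← Real.norm_eq_abs]
    apply intervalIntegral.norm_integral_le_of_norm_le_const
    intro z hz
    rw [uIoc_of_le hxy] at hz
    have hz0 : 0 < z := lt_trans hx.1 hz.1
    have hz1 : z < 1 := lt_of_le_of_lt hz.2 hy.2
    rw [Real.norm_eq_abs]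
    exact Fv_bound hs hz0 hz1 (hpinf_low z hz0 hz1)
  have hCpos : 0 < s + (lam s)⁻¹ := by positivity
  have hpcont : ∀ t ∈ Ioo (0:ℝ) 1, ContinuousAt pinf t := by
    intro t ht
    rw [Metric.continuousAt_iff]
    intro e he
    refine ⟨min (min t (1 - t)) (e / (s + (lam s)⁻¹ + 1)), ?_, ?_⟩
    · have h1 : 0 < min t (1 - t) := lt_min ht.1 (by linarith [ht.2])
      have h2 : 0 < e / (s + (lam s)⁻¹ + 1) := by positivity
      exact lt_min h1 h2
    · intro x hx
      rw [Real.dist_eq] at hx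
      have hx1 : |x - t| < min t (1 - t) := lt_of_lt_of_le hx (min_le_left _ _)
      have hx2 : |x - t| < e / (s + (lam s)⁻¹ + 1) := lt_of_lt_of_le hx (min_le_right _ _)
      have hxm : x ∈ Ioo (0:ℝ) 1 := by
        rw [abs_lt] at hx1
        constructor
        · have := min_le_left t (1 - t); linarith [hx1.1]
        · have := min_le_right t (1 - t); linarith [hx1.2]
      have hb : |pinf x - pinf t| ≤ (s + (lam s)⁻¹) * |x - t| := by
        rcases le_total x t with h | h
        · have := hLip x t hxm ht h
          rw [abs_sub_comm (pinf x), abs_sub_comm x]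
          exact this
        · exact hLip t x ht hxm h
      rw [Real.dist_eq]
      calc |pinf x - pinf t| ≤ (s + (lam s)⁻¹) * |x - t| := hb
        _ ≤ (s + (lam s)⁻¹ + 1) * |x - t| := by nlinarith [abs_nonneg (x - t)]
        _ < (s + (lam s)⁻¹ + 1) * (e / (s + (lam s)⁻¹ + 1)) :=
            mul_lt_mul_of_pos_left hx2 (by linarith)
        _ = e := by field_simp
  -- the derivative
  refine ⟨pinf, ?_, fun t ht => ⟨hpinf_low t ht.1 ht.2, hpinf_up t ht.1 ht.2⟩⟩
  intro t ht
  set x : ℝ := t / 2 with hx_def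
  set y : ℝ := (t + 1) / 2 with hy_def
  have hx0 : 0 < x := by simp only [hx_def]; linarith [ht.1]
  have hxt : x < t := by simp only [hx_def]; linarith [ht.1]
  have hty : t < y := by simp only [hy_def]; linarith [ht.2]
  have hy1 : y < 1 := by simp only [hy_def]; linarith [ht.2]
  have hgc : ∀ z ∈ Ioo (0:ℝ) 1, ContinuousAt (fun u => Fv s u (pinf u)) z := by
    intro z hz
    have hne : pinf z ≠ 0 := ne_of_gt (hpinf_pos z hz.1 hz.2)
    unfold Fv
    apply ContinuousAt.sub continuousAt_const
    exact ContinuousAt.div (by fun_prop) (hpcont z hz) hne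
  have hxIoo : x ∈ Ioo (0:ℝ) 1 := ⟨hx0, lt_trans hxt ht.2⟩
  have hint : IntervalIntegrable (fun u => Fv s u (pinf u)) MeasureTheory.volume x t := by
    apply ContinuousOn.intervalIntegrable
    intro z hz
    rw [uIcc_of_le (le_of_lt hxt)] at hz
    have hz01 : z ∈ Ioo (0:ℝ) 1 := ⟨lt_of_lt_of_le hx0 hz.1, lt_of_le_of_lt hz.2 ht.2⟩
    exact (hgc z hz01).continuousWithinAt
  have hmeas : StronglyMeasurableAtFilter (fun u => Fv s u (pinf u)) (𝓝 t)
      MeasureTheory.volume :=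
    ContinuousAt.stronglyMeasurableAtFilter isOpen_Ioo hgc t ht
  have hI : HasDerivAt (fun u => pinf x + ∫ z in x..u, Fv s z (pinf z))
      (Fv s t (pinf t)) t :=
    (intervalIntegral.integral_hasDerivAt_right hint hmeas (hgc t ht)).const_add (pinf x)
  have hev : pinf =ᶠ[𝓝 t] fun u => pinf x + ∫ z in x..u, Fv s z (pinf z) := by
    filter_upwards [Ioo_mem_nhds hxt hty] with u hu
    have hid := hkey x u hx0 (le_of_lt hu.1) (lt_trans hu.2 hy1)
    linarith
  exact hI.congr_of_eventuallyEq hev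

/-- Existence of monotone FKPP fronts for every speed `s ≥ 2`: there is a `C²`
profile `Φ` with `Φ'' + sΦ' + Φ(1−Φ) = 0`, `0 < Φ < 1`, `Φ` strictly
decreasing, `Φ(−∞) = 1` and `Φ(+∞) = 0`. -/
theorem FKPP_monotone_front_exists_for_speed_ge_two
    (s : ℝ) (hs : 2 ≤ s) :
    ∃ Φ : ℝ → ℝ,
      ContDiff ℝ 2 Φ ∧
      (∀ η : ℝ, deriv (deriv Φ) η + s * deriv Φ η + Φ η * (1 - Φ η) = 0) ∧
      (∀ η : ℝ, 0 < Φ η ∧ Φ η < 1) ∧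
      StrictAnti Φ ∧
      Tendsto Φ atBot (𝓝 1) ∧ Tendsto Φ atTop (𝓝 0) := by
  have hspos : (0:ℝ) < s := by linarith
  obtain ⟨p, hp1, hp2⟩ := exists_p hs
  have hppos : ∀ t ∈ Ioo (0:ℝ) 1, 0 < p t :=
    fun t ht => lt_of_lt_of_le (mlow_pos hs ht.1 ht.2) (hp2 t ht).1
  have hpcont : ∀ t ∈ Ioo (0:ℝ) 1, ContinuousAt p t := fun t ht => (hp1 t ht).continuousAt
  -- the inverse of p is continuous and positive on (0,1)
  have hinv_cont : ∀ t ∈ Ioo (0:ℝ) 1, ContinuousAt (fun z => (p z)⁻¹) t :=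
    fun t ht => (hpcont t ht).inv₀ (ne_of_gt (hppos t ht))
  have hInt : ∀ u v : ℝ, u ∈ Ioo (0:ℝ) 1 → v ∈ Ioo (0:ℝ) 1 →
      IntervalIntegrable (fun z => (p z)⁻¹) MeasureTheory.volume u v := by
    intro u v hu hv
    apply ContinuousOn.intervalIntegrable
    intro z hz
    have hz' : z ∈ Ioo (0:ℝ) 1 := by
      rcases le_total u v with h | h
      · rw [uIcc_of_le h] at hz
        exact ⟨lt_of_lt_of_le hu.1 hz.1, lt_of_le_of_lt hz.2 hv.2⟩
      · rw [uIcc_of_ge h] at hz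
        exact ⟨lt_of_lt_of_le hv.1 hz.1, lt_of_le_of_lt hz.2 hu.2⟩
    exact (hinv_cont z hz').continuousWithinAt
  have hhalf : (1/2 : ℝ) ∈ Ioo (0:ℝ) 1 := by norm_num
  -- the separatrix time
  set E : ℝ → ℝ := fun u => ∫ t in u..(1/2 : ℝ), (p t)⁻¹ with hE_def
  have hE_sub : ∀ u v : ℝ, u ∈ Ioo (0:ℝ) 1 → v ∈ Ioo (0:ℝ) 1 →
      E u - E v = ∫ t in u..v, (p t)⁻¹ := by
    intro u v hu hv
    have := intervalIntegral.integral_add_adjacent_intervals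
      (hInt u v hu hv) (hInt v (1/2) hv hhalf)
    simp only [hE_def]
    linarith [this]
  have hE_anti : ∀ u v : ℝ, u ∈ Ioo (0:ℝ) 1 → v ∈ Ioo (0:ℝ) 1 → u < v → E v < E u := by
    intro u v hu hv huv
    have hpos : 0 < ∫ t in u..v, (p t)⁻¹ := by
      apply intervalIntegral.intervalIntegral_pos_of_pos_on (hInt u v hu hv)
      · intro z hz
        have hz' : z ∈ Ioo (0:ℝ) 1 := ⟨lt_trans hu.1 hz.1, lt_trans hz.2 hv.2⟩
        exact inv_pos.2 (hppos z hz')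
      · exact huv
    have := hE_sub u v hu hv
    linarith
  have hE_deriv : ∀ u ∈ Ioo (0:ℝ) 1, HasDerivAt E (-(p u)⁻¹) u := by
    intro u hu
    have h1 : HasDerivAt (fun w => ∫ t in (1/2 : ℝ)..w, (p t)⁻¹) ((p u)⁻¹) u := by
      apply intervalIntegral.integral_hasDerivAt_right (hInt (1/2) u hhalf hu)
      · exact ContinuousAt.stronglyMeasurableAtFilter isOpen_Ioo hinv_cont u hu
      · exact hinv_cont u hu
    have h2 : E = fun w => -∫ t in (1/2 : ℝ)..w, (p t)⁻¹ := by
      funext w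
      simp only [hE_def]
      rw [intervalIntegral.integral_symm]
    rw [h2]
    exact h1.neg
  have hE_cont : ∀ u ∈ Ioo (0:ℝ) 1, ContinuousAt E u :=
    fun u hu => (hE_deriv u hu).continuousAt
  -- divergence bounds
  have hMup_pos : ∀ t ∈ Ioo (0:ℝ) 1, 0 < Mup s t := by
    intro t ht
    have h1 := ht.1
    have h2 := ht.2
    unfold Mup
    nlinarith [mul_pos h1 (by linarith : (0:ℝ) < 1 - t), hspos]
  have hMup_inv : ∀ t ∈ Ioo (0:ℝ) 1, (Mup s t)⁻¹ ≤ (p t)⁻¹ := by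
    intro t ht
    have h1 := (hp2 t ht).2
    have h2 : 0 < p t := hppos t ht
    simpa [one_div] using one_div_le_one_div_of_le h2 h1
  -- lower bound for E on (0,1/2]
  have hE_lower : ∀ u : ℝ, 0 < u → u ≤ 1/2 →
      2 / s * (Real.log (1/2) - Real.log u) ≤ E u := by
    intro u hu hu2
    have huI : u ∈ Ioo (0:ℝ) 1 := ⟨hu, by linarith⟩
    have hlog : ∫ t in u..(1/2 : ℝ), 2 / s * t⁻¹ = 2 / s * (Real.log (1/2) - Real.log u) := by
      rw [intervalIntegral.integral_const_mul]
      congr 1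
      have hderiv : ∀ t ∈ uIcc u (1/2 : ℝ), HasDerivAt Real.log t⁻¹ t := by
        intro t htm
        rw [uIcc_of_le hu2] at htm
        exact Real.hasDerivAt_log (by linarith [htm.1])
      rw [intervalIntegral.integral_eq_sub_of_hasDerivAt hderiv]
      apply ContinuousOn.intervalIntegrable
      intro z hz
      rw [uIcc_of_le hu2] at hz
      exact (continuousAt_inv₀ (by linarith [hz.1] : z ≠ 0)).continuousWithinAt
    rw [← hlog]
    simp only [hE_def]
    apply intervalIntegral.integral_mono_on hu2
    · apply ContinuousOn.intervalIntegrable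
      intro z hz
      rw [uIcc_of_le hu2] at hz
      apply ContinuousAt.continuousWithinAt
      apply ContinuousAt.mul continuousAt_const
      exact continuousAt_inv₀ (by linarith [hz.1] : z ≠ 0)
    · exact hInt u (1/2) huI hhalf
    · intro z hz
      have hz' : z ∈ Ioo (0:ℝ) 1 := ⟨lt_of_lt_of_le hu hz.1, by linarith [hz.2]⟩
      have h1 : (Mup s z)⁻¹ ≤ (p z)⁻¹ := hMup_inv z hz'
      have h2 : 2 / s * z⁻¹ ≤ (Mup s z)⁻¹ := by
        have hz0 : 0 < z := hz'.1
        have hz1 : z < 1 := hz'.2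
        have hM : 0 < Mup s z := hMup_pos z hz'
        have hle : Mup s z ≤ s / 2 * z := by unfold Mup; nlinarith [mul_pos hspos (mul_pos hz0 hz0)]
        have h3 : 1 / (s / 2 * z) ≤ 1 / Mup s z := one_div_le_one_div_of_le hM hle
        have h4 : 2 / s * z⁻¹ = 1 / (s / 2 * z) := by
          field_simp
        rw [h4, ← one_div]
        exact h3
      linarith
  -- upper bound for E on [1/2, 1)
  have hE_upper : ∀ u : ℝ, 1/2 ≤ u → u < 1 →
      E u ≤ -(2 / s) * (Real.log (1/2) - Real.log (1 - u)) := by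
    intro u hu hu1
    have huI : u ∈ Ioo (0:ℝ) 1 := ⟨by linarith, hu1⟩
    have hES : E u = -∫ t in (1/2 : ℝ)..u, (p t)⁻¹ := by
      simp only [hE_def]
      rw [intervalIntegral.integral_symm]
    have hlog : ∫ t in (1/2 : ℝ)..u, 2 / s * (1 - t)⁻¹
        = 2 / s * (Real.log (1/2) - Real.log (1 - u)) := by
      rw [intervalIntegral.integral_const_mul]
      congr 1
      have hderiv : ∀ t ∈ uIcc (1/2 : ℝ) u, HasDerivAt (fun t => -Real.log (1 - t)) (1 - t)⁻¹ t := by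
        intro t htm
        rw [uIcc_of_le hu] at htm
        have hne : (1:ℝ) - t ≠ 0 := by
          have := htm.2
          intro h
          have : t = 1 := by linarith
          linarith [hu1]
        have h1 : HasDerivAt (fun t : ℝ => 1 - t) (-1) t := by
          exact ((hasDerivAt_const t (1:ℝ)).sub (hasDerivAt_id t)).congr_deriv (by norm_num)
        have h2 := (Real.hasDerivAt_log hne).comp t h1
        have h3 := h2.neg
        exact h3.congr_deriv (by ring)
      rw [intervalIntegral.integral_eq_sub_of_hasDerivAt hderiv]
      · rw [show (1:ℝ) - 1/2 = 1/2 by norm_num]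
        ring
      · apply ContinuousOn.intervalIntegrable
        intro z hz
        rw [uIcc_of_le hu] at hz
        have hne : (1:ℝ) - z ≠ 0 := by
          have := hz.2
          intro h
          have : z = 1 := by linarith
          linarith [hu1]
        exact (ContinuousAt.inv₀ (by fun_prop) hne).continuousWithinAt
    have hmono : ∫ t in (1/2 : ℝ)..u, 2 / s * (1 - t)⁻¹ ≤ ∫ t in (1/2 : ℝ)..u, (p t)⁻¹ := by
      apply intervalIntegral.integral_mono_on hu
      · apply ContinuousOn.intervalIntegrable
        intro z hz
        rw [uIcc_of_le hu] at hz
        have hne : (1:ℝ) - z ≠ 0 := by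
          intro h
          have : z = 1 := by linarith
          linarith [hz.2, hu1]
        exact (ContinuousAt.mul continuousAt_const
          (ContinuousAt.inv₀ (by fun_prop) hne)).continuousWithinAt
      · exact hInt (1/2) u hhalf huI
      · intro z hz
        have hz' : z ∈ Ioo (0:ℝ) 1 := ⟨by linarith [hz.1], lt_of_le_of_lt hz.2 hu1⟩
        have h1 : (Mup s z)⁻¹ ≤ (p z)⁻¹ := hMup_inv z hz'
        have h2 : 2 / s * (1 - z)⁻¹ ≤ (Mup s z)⁻¹ := by
          have hz0 : 0 < z := hz'.1
          have hz1 : z < 1 := hz'.2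
          have hM : 0 < Mup s z := hMup_pos z hz'
          have hle : Mup s z ≤ s / 2 * (1 - z) := by
            unfold Mup
            nlinarith [mul_pos hspos (mul_pos (sub_pos.2 hz1) (sub_pos.2 hz1))]
          have h3 : 1 / (s / 2 * (1 - z)) ≤ 1 / Mup s z := one_div_le_one_div_of_le hM hle
          have h4 : 2 / s * (1 - z)⁻¹ = 1 / (s / 2 * (1 - z)) := by
            have : (1:ℝ) - z ≠ 0 := by intro h; nlinarith
            field_simp
          rw [h4, ← one_div]
          exact h3
        linarith
    rw [hES]
    rw [hlog] at hmono
    linarith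
  -- surjectivity of E
  have hE_surj : ∀ x : ℝ, ∃ u, u ∈ Ioo (0:ℝ) 1 ∧ E u = x := by
    intro x
    set M : ℝ := max x 0 with hM_def
    set M' : ℝ := max (-x) 0 with hM'_def
    have hM0 : 0 ≤ M := le_max_right _ _
    have hM'0 : 0 ≤ M' := le_max_right _ _
    set u₁ : ℝ := 1/2 * Real.exp (-(s/2) * M) with hu₁_def
    set u₂ : ℝ := 1 - 1/2 * Real.exp (-(s/2) * M') with hu₂_def
    have hexp1 : Real.exp (-(s/2) * M) ≤ 1 := by
      rw [Real.exp_le_one_iff]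
      nlinarith
    have hexp2 : Real.exp (-(s/2) * M') ≤ 1 := by
      rw [Real.exp_le_one_iff]
      nlinarith
    have hu₁pos : 0 < u₁ := by positivity
    have hu₁le : u₁ ≤ 1/2 := by
      simp only [hu₁_def]
      nlinarith [Real.exp_pos (-(s/2) * M)]
    have hu₂ge : 1/2 ≤ u₂ := by
      simp only [hu₂_def]
      nlinarith [Real.exp_pos (-(s/2) * M')]
    have hu₂lt : u₂ < 1 := by
      simp only [hu₂_def]
      nlinarith [Real.exp_pos (-(s/2) * M')]
    have hlogu₁ : Real.log u₁ = Real.log (1/2) + (-(s/2) * M) := by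
      simp only [hu₁_def]
      rw [Real.log_mul (by norm_num) (ne_of_gt (Real.exp_pos _)), Real.log_exp]
    have hE1 : x ≤ E u₁ := by
      have := hE_lower u₁ hu₁pos hu₁le
      rw [hlogu₁] at this
      have hx : x ≤ M := le_max_left _ _
      have h2 : 2 / s * (s / 2 * M) = M := by field_simp
      calc x ≤ M := hx
        _ = 2 / s * (s / 2 * M) := h2.symm
        _ = 2 / s * (Real.log (1/2) - (Real.log (1/2) + (-(s/2) * M))) := by ring_nf
        _ ≤ E u₁ := this
    have hlogu₂ : Real.log (1 - u₂) = Real.log (1/2) + (-(s/2) * M') := by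
      simp only [hu₂_def]
      rw [show (1:ℝ) - (1 - 1/2 * Real.exp (-(s/2) * M')) = 1/2 * Real.exp (-(s/2) * M')
        by ring]
      rw [Real.log_mul (by norm_num) (ne_of_gt (Real.exp_pos _)), Real.log_exp]
    have hE2 : E u₂ ≤ x := by
      have := hE_upper u₂ hu₂ge hu₂lt
      rw [hlogu₂] at this
      have hx : -x ≤ M' := le_max_left _ _
      have h2 : -(2 / s) * (s / 2 * M') = -M' := by field_simp
      calc E u₂ ≤ -(2 / s) * (Real.log (1/2) - (Real.log (1/2) + (-(s/2) * M'))) := this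
        _ = -M' := by field_simp; ring
        _ ≤ x := by linarith
    have hu₁u₂ : u₁ ≤ u₂ := le_trans hu₁le hu₂ge
    have hIccsub : Icc u₁ u₂ ⊆ Ioo (0:ℝ) 1 :=
      fun z hz => ⟨lt_of_lt_of_le hu₁pos hz.1, lt_of_le_of_lt hz.2 hu₂lt⟩
    have hcontE : ContinuousOn E (Icc u₁ u₂) :=
      fun z hz => (hE_cont z (hIccsub hz)).continuousWithinAt
    have hmem : x ∈ Icc (E u₂) (E u₁) := ⟨hE2, hE1⟩
    obtain ⟨u, hu, hEu⟩ := intermediate_value_Icc' hu₁u₂ hcontE hmem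
    exact ⟨u, hIccsub hu, hEu⟩
  -- the front profile
  choose Φ hΦmem hΦE using hE_surj
  have hE_inj : ∀ u v : ℝ, u ∈ Ioo (0:ℝ) 1 → v ∈ Ioo (0:ℝ) 1 → E u = E v → u = v := by
    intro u v hu hv h
    rcases lt_trichotomy u v with hlt | heq | hgt
    · exact absurd h (ne_of_gt (hE_anti u v hu hv hlt))
    · exact heq
    · exact absurd h (ne_of_lt (hE_anti v u hv hu hgt))
  have hΦE' : ∀ u ∈ Ioo (0:ℝ) 1, Φ (E u) = u :=
    fun u hu => hE_inj _ u (hΦmem (E u)) hu (hΦE (E u))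
  have hΦpos : ∀ x, 0 < Φ x := fun x => (hΦmem x).1
  have hΦlt1 : ∀ x, Φ x < 1 := fun x => (hΦmem x).2
  -- Φ is strictly decreasing
  have hΦanti : StrictAnti Φ := by
    intro x y hxy
    rcases lt_trichotomy (Φ y) (Φ x) with h | h | h
    · exact h
    · exfalso
      have : E (Φ x) = E (Φ y) := by rw [h]
      rw [hΦE x, hΦE y] at this
      linarith
    · exfalso
      have := hE_anti (Φ x) (Φ y) (hΦmem x) (hΦmem y) h
      rw [hΦE x, hΦE y] at this
      linarith
  -- Φ is continuous
  have hΦcont : ∀ x : ℝ, ContinuousAt Φ x := by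
    intro x₀
    rw [ContinuousAt, tendsto_order]
    constructor
    · intro b hb
      rcases le_or_gt b 0 with hb0 | hb0
      · exact Eventually.of_forall (fun x => lt_of_le_of_lt hb0 (hΦpos x))
      · have hbI : b ∈ Ioo (0:ℝ) 1 := ⟨hb0, lt_trans hb (hΦlt1 x₀)⟩
        have hEb : x₀ < E b := by
          have := hE_anti b (Φ x₀) hbI (hΦmem x₀) hb
          rwa [hΦE x₀] at this
        filter_upwards [Iio_mem_nhds hEb] with x hx
        by_contra hcon
        push_neg at hcon
        have : E b ≤ E (Φ x) := by
          rcases lt_or_eq_of_le hcon with h | h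
          · exact le_of_lt (hE_anti (Φ x) b (hΦmem x) hbI h)
          · rw [h]
        rw [hΦE x] at this
        exact absurd hx (not_lt.2 this)
    · intro b hb
      rcases le_or_gt 1 b with hb1 | hb1
      · exact Eventually.of_forall (fun x => lt_of_lt_of_le (hΦlt1 x) hb1)
      · have hbI : b ∈ Ioo (0:ℝ) 1 := ⟨lt_trans (hΦpos x₀) hb, hb1⟩
        have hEb : E b < x₀ := by
          have := hE_anti (Φ x₀) b (hΦmem x₀) hbI hb
          rwa [hΦE x₀] at this
        filter_upwards [Ioi_mem_nhds hEb] with x hx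
        by_contra hcon
        push_neg at hcon
        have : E (Φ x) ≤ E b := by
          rcases lt_or_eq_of_le hcon with h | h
          · exact le_of_lt (hE_anti b (Φ x) hbI (hΦmem x) h)
          · rw [← h]
        rw [hΦE x] at this
        exact absurd hx (not_lt.2 this)
  -- derivative of Φ
  have hΦderiv : ∀ x : ℝ, HasDerivAt Φ (-(p (Φ x))) x := by
    intro x
    have h1 : HasDerivAt E (-(p (Φ x))⁻¹) (Φ x) := hE_deriv (Φ x) (hΦmem x)
    have hne : -(p (Φ x))⁻¹ ≠ 0 := by
      have := hppos (Φ x) (hΦmem x)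
      simp only [ne_eq, neg_eq_zero, inv_eq_zero]
      exact ne_of_gt this
    have := HasDerivAt.of_local_left_inverse (hΦcont x) h1 hne
      (Eventually.of_forall (fun y => hΦE y))
    have heq : (-(p (Φ x))⁻¹)⁻¹ = -(p (Φ x)) := by
      have hne2 : p (Φ x) ≠ 0 := ne_of_gt (hppos (Φ x) (hΦmem x))
      field_simp
    rwa [heq] at this
  have hΦdiff : Differentiable ℝ Φ := fun x => (hΦderiv x).differentiableAt
  have hderivΦ : deriv Φ = fun x => -(p (Φ x)) := funext fun x => (hΦderiv x).deriv
  have hΦcont' : Continuous Φ := continuous_iff_continuousAt.2 hΦcont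
  have hpΦcont : Continuous fun x => p (Φ x) := by
    apply continuous_iff_continuousAt.2
    intro x
    exact (hpcont (Φ x) (hΦmem x)).comp (hΦcont x)
  -- second derivative
  have hqF : ∀ u q : ℝ, q ≠ 0 → q * Fv s u q = s * q - u * (1 - u) := by
    intro u q hq
    unfold Fv
    field_simp
  have hd2 : ∀ x : ℝ, HasDerivAt (deriv Φ) (s * p (Φ x) - Φ x * (1 - Φ x)) x := by
    intro x
    have hcomp : HasDerivAt (fun y => p (Φ y)) (Fv s (Φ x) (p (Φ x)) * -(p (Φ x))) x :=
      (hp1 (Φ x) (hΦmem x)).comp x (hΦderiv x)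
    have h2 := hcomp.neg
    rw [hderivΦ]
    have heq : -(Fv s (Φ x) (p (Φ x)) * -(p (Φ x))) = s * p (Φ x) - Φ x * (1 - Φ x) := by
      have h := hqF (Φ x) (p (Φ x)) (ne_of_gt (hppos (Φ x) (hΦmem x)))
      linear_combination h
    rwa [heq] at h2
  have hd2' : deriv (deriv Φ) = fun x => s * p (Φ x) - Φ x * (1 - Φ x) :=
    funext fun x => (hd2 x).deriv
  -- smoothness
  have hC2 : ContDiff ℝ 2 Φ := by
    have hcont2 : Continuous (deriv (deriv Φ)) := by
      rw [hd2']
      exact (continuous_const.mul hpΦcont).sub (hΦcont'.mul (continuous_const.sub hΦcont'))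
    have h1 : ContDiff ℝ 1 (deriv Φ) :=
      contDiff_one_iff_deriv.2 ⟨fun x => (hd2 x).differentiableAt, hcont2⟩
    rw [show (2 : WithTop ℕ∞) = 1 + 1 from by norm_num]
    exact contDiff_succ_iff_deriv.2 ⟨hΦdiff, by simp, h1⟩
  refine ⟨Φ, hC2, ?_, fun x => ⟨hΦpos x, hΦlt1 x⟩, hΦanti, ?_, ?_⟩
  · intro x
    rw [hd2', hderivΦ]
    ring
  · -- limit at -∞ is 1
    have hbdd : BddAbove (range Φ) := ⟨1, by rintro z ⟨x, rfl⟩; exact le_of_lt (hΦlt1 x)⟩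
    have htend := tendsto_atBot_ciSup hΦanti.antitone hbdd
    have hsup : ⨆ x, Φ x = 1 := by
      apply le_antisymm
      · exact ciSup_le (fun x => le_of_lt (hΦlt1 x))
      · by_contra hcon
        push_neg at hcon
        set c : ℝ := ⨆ x, Φ x with hc_def
        have hc0 : 0 < c := lt_of_lt_of_le (hΦpos 0) (le_ciSup hbdd 0)
        set u : ℝ := (c + 1) / 2 with hu_def
        have huI : u ∈ Ioo (0:ℝ) 1 := ⟨by positivity, by simp only [hu_def]; linarith⟩
        have : Φ (E u) ≤ c := le_ciSup hbdd (E u)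
        rw [hΦE' u huI] at this
        simp only [hu_def] at this
        linarith
    rwa [hsup] at htend
  · -- limit at +∞ is 0
    have hbdd : BddBelow (range Φ) := ⟨0, by rintro z ⟨x, rfl⟩; exact le_of_lt (hΦpos x)⟩
    have htend := tendsto_atTop_ciInf hΦanti.antitone hbdd
    have hinf : ⨅ x, Φ x = 0 := by
      apply le_antisymm
      · by_contra hcon
        push_neg at hcon
        set c : ℝ := ⨅ x, Φ x with hc_def
        have hc1 : c < 1 := lt_of_le_of_lt (ciInf_le hbdd 0) (hΦlt1 0)
        set u : ℝ := c / 2 with hu_def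
        have huI : u ∈ Ioo (0:ℝ) 1 := ⟨by positivity, by simp only [hu_def]; linarith⟩
        have : c ≤ Φ (E u) := ciInf_le hbdd (E u)
        rw [hΦE' u huI] at this
        simp only [hu_def] at this
        linarith
      · exact le_ciInf (fun x => le_of_lt (hΦpos x))
    rwa [hinf] at htend
end

section
/- Let s ∈ ℝ and let Φ : ℝ → ℝ be twice continuously differentiable with Φ''(η) + s·Φ'(η) + Φ(η)(1 − Φ(η)) = 0 for all η ∈ ℝ, Φ(η) ≥ 0 for all η, Φ(η) → 1 as η → −∞ and Φ(η) → 0 as η → +∞. Then |s| ≥ 2. That is, no nonnegative FKPP travelling front exists with speed below the minimal speed 2; for |s| < 2 the linearization at the origin has complex eigenvalues forcing any connecting orbit to attain negative values. -/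
/-!
If `|s| < 2`, then `w = e^{sη/2} Φ` satisfies `w'' = (s²/4 - 1 + Φ) w`, and since `Φ → 0` at
`+∞` the coefficient is eventually at most `-δ < 0`. A nonnegative `w` with `w'' ≤ -δ w` on a
half-line is concave, hence nondecreasing, and then `w'' ≤ -δ w(B)` would drive `w'` below zero
unless `w(B) = 0`. So `Φ` vanishes near `+∞`; uniqueness for the first-order system satisfied by
`(Φ, Φ')` then gives `Φ ≡ 0`, contradicting `Φ(-∞) = 1`.
-/

open Filter Topology Set

lemma nonneg_of_eventually_nonneg_of_hasDerivAt_le {F F' : ℝ → ℝ} {c : ℝ}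
    (hF : ∀ x, HasDerivAt F (F' x) x) (hpos : ∀ᶠ x in atTop, 0 ≤ F x)
    (hle : ∀ᶠ x in atTop, F' x ≤ c) : 0 ≤ c := by
  by_contra! hc
  obtain ⟨B, hB⟩ := eventually_atTop.1 hle
  have hlin : ∀ x ≥ B, F x ≤ F B + c * (x - B) := fun x hx => by
    have := (convex_Ici B).image_sub_le_mul_sub_of_deriv_le
      (HasDerivAt.continuousOn fun y _ => hF y)
      (fun y _ => (hF y).differentiableAt.differentiableWithinAt)
      (fun y hy => (hF y).deriv ▸ hB y (interior_subset hy)) B self_mem_Ici x hx hx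
    linarith
  have htend : Tendsto (fun x => F B + c * (x - B)) atTop atBot :=
    tendsto_atBot_add_const_left _ _
      ((tendsto_atTop_add_const_right _ _ tendsto_id).const_mul_atTop_of_neg hc)
  obtain ⟨x, hx0, hxB, hneg⟩ :=
    (hpos.and ((eventually_ge_atTop B).and (htend.eventually (eventually_lt_atBot 0)))).exists
  linarith [hlin x hxB]

lemma eventuallyEq_zero_of_second_deriv_le_neg_mul {w w' w'' : ℝ → ℝ} {δ : ℝ}
    (hδ : 0 < δ) (hw : ∀ x, HasDerivAt w (w' x) x) (hw' : ∀ x, HasDerivAt w' (w'' x) x)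
    (hpos : ∀ᶠ x in atTop, 0 ≤ w x) (hle : ∀ᶠ x in atTop, w'' x ≤ -δ * w x) :
    w =ᶠ[atTop] 0 := by
  obtain ⟨A, hA⟩ := eventually_atTop.1 (hpos.and hle)
  have hconcave : ∀ B ≥ A, AntitoneOn w' (Ici B) := fun B hB =>
    antitoneOn_of_hasDerivWithinAt_nonpos (convex_Ici B) (HasDerivAt.continuousOn fun x _ => hw' x)
      (fun x _ => (hw' x).hasDerivWithinAt) fun x hx => by
        have := hA x (hB.trans (interior_subset hx))
        nlinarith
  have hw'_nonneg : ∀ B ≥ A, 0 ≤ w' B := fun B hB =>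
    nonneg_of_eventually_nonneg_of_hasDerivAt_le hw
      (eventually_atTop.2 ⟨A, fun x hx => (hA x hx).1⟩)
      (eventually_atTop.2 ⟨B, fun x hx => hconcave B hB self_mem_Ici hx hx⟩)
  have hmono : MonotoneOn w (Ici A) :=
    monotoneOn_of_hasDerivWithinAt_nonneg (convex_Ici A) (HasDerivAt.continuousOn fun x _ => hw x)
      (fun x _ => (hw x).hasDerivWithinAt) fun x hx => hw'_nonneg x (interior_subset hx)
  filter_upwards [eventually_ge_atTop A] with B hB
  -- on `[B, ∞)` we have `w'' ≤ -δ w ≤ -δ w(B)` by monotonicity, while `w' ≥ 0` there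
  have hδw : 0 ≤ -δ * w B := nonneg_of_eventually_nonneg_of_hasDerivAt_le hw'
    (eventually_atTop.2 ⟨A, hw'_nonneg⟩)
    (eventually_atTop.2 ⟨B, fun x hx => by
      have := hmono hB (hB.trans hx) hx
      nlinarith [hA x (hB.trans hx)]⟩)
  have := (hA B hB).1
  simp only [Pi.zero_apply]
  nlinarith

lemma ODE_solution_unique_univ_of_contDiff {E : Type*} [NormedAddCommGroup E] [NormedSpace ℝ E]
    {v : E → E} (hv : ContDiff ℝ 1 v) {f g : ℝ → E} (hf : ∀ t, HasDerivAt f (v (f t)) t)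
    (hg : ∀ t, HasDerivAt g (v (g t)) t) {t₀ : ℝ} (h : f t₀ = g t₀) : f = g := by
  have hclopen : IsClopen {t | f t = g t} := by
    refine ⟨isClosed_eq (continuous_iff_continuousAt.2 fun t => (hf t).continuousAt)
      (continuous_iff_continuousAt.2 fun t => (hg t).continuousAt), ?_⟩
    refine isOpen_iff_mem_nhds.2 fun t ht => ?_
    obtain ⟨K, U, hU, hK⟩ := (hv.contDiffAt (x := f t)).exists_lipschitzOnWith
    have hgU : U ∈ 𝓝 (g t) := ht ▸ hU
    exact ODE_solution_unique_of_eventually (v := fun _ => v) (s := fun _ => U)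
      (Eventually.of_forall fun _ => hK)
      (Eventually.of_forall hf |>.and ((hf t).continuousAt.preimage_mem_nhds hU))
      (Eventually.of_forall hg |>.and ((hg t).continuousAt.preimage_mem_nhds hgU)) ht
  funext t
  exact (hclopen.eq_univ ⟨t₀, h⟩).ge (mem_univ t)

lemma secondOrderODE_eq_zero_of_eventuallyEq_zero {f : ℝ → ℝ} (hf : ContDiff ℝ 1 f)
    (hf0 : f 0 = 0) {s : ℝ} {Φ Φ' : ℝ → ℝ} (hΦ : ∀ t, HasDerivAt Φ (Φ' t) t)
    (hΦ' : ∀ t, HasDerivAt Φ' (-s * Φ' t - f (Φ t)) t) (hzero : Φ =ᶠ[atTop] 0) :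
    Φ = 0 := by
  obtain ⟨A, hA⟩ := eventually_atTop.1 hzero
  have hnear : Φ =ᶠ[𝓝 (A + 1)] fun _ => 0 := by
    filter_upwards [Ioi_mem_nhds (lt_add_one A)] with t ht using hA t ht.le
  have hΦ'A : Φ' (A + 1) = 0 :=
    (hΦ (A + 1)).unique ((hasDerivAt_const (A + 1) (0 : ℝ)).congr_of_eventuallyEq hnear)
  have hphase : (fun t => (Φ t, Φ' t)) = fun _ => 0 :=
    ODE_solution_unique_univ_of_contDiff (v := fun p : ℝ × ℝ => (p.2, -s * p.2 - f p.1))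
      (by fun_prop) (fun t => (hΦ t).prodMk (hΦ' t))
      (fun t => (hasDerivAt_const t _).congr_deriv (by ext <;> simp [hf0]))
      (t₀ := A + 1) (by simp [hA (A + 1) (by linarith), hΦ'A])
  funext t
  exact congrArg Prod.fst (congrFun hphase t)

lemma hasDerivAt_exp_mul_div_two_mul (s : ℝ) {f : ℝ → ℝ} {f' x : ℝ}
    (hf : HasDerivAt f f' x) :
    HasDerivAt (fun y => Real.exp (s * y / 2) * f y)
      (Real.exp (s * x / 2) * (s / 2 * f x + f')) x := by
  have hexp : HasDerivAt (fun y => Real.exp (s * y / 2)) (Real.exp (s * x / 2) * (s / 2)) x := by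
    simpa using (((hasDerivAt_id x).const_mul s).div_const 2).exp
  exact (hexp.mul hf).congr_deriv (by ring)

lemma FKPP_profile_eventuallyEq_zero_of_abs_lt_two {s : ℝ} {Φ Φ' : ℝ → ℝ} (hs : |s| < 2)
    (hΦ : ∀ x, HasDerivAt Φ (Φ' x) x)
    (hΦ' : ∀ x, HasDerivAt Φ' (-s * Φ' x - Φ x * (1 - Φ x)) x)
    (hpos : ∀ x, 0 ≤ Φ x) (hlim : Tendsto Φ atTop (𝓝 0)) : Φ =ᶠ[atTop] 0 := by
  have hs2 : s ^ 2 < 4 := by nlinarith [abs_lt.1 hs]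
  set δ := (1 - s ^ 2 / 4) / 2 with hδ_def
  have hδ : 0 < δ := by linarith
  set e := fun x : ℝ => Real.exp (s * x / 2)
  have hw := fun x => hasDerivAt_exp_mul_div_two_mul s (hΦ x)
  have hw' := fun x =>
    hasDerivAt_exp_mul_div_two_mul s (((hΦ x).const_mul (s / 2)).fun_add (hΦ' x))
  have hwzero := eventuallyEq_zero_of_second_deriv_le_neg_mul hδ hw hw'
    (Eventually.of_forall fun x => mul_nonneg (Real.exp_pos _).le (hpos x)) <| by
      filter_upwards [hlim.eventually (gt_mem_nhds hδ)] with x hx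
      have hewΦ : 0 ≤ e x * Φ x := mul_nonneg (Real.exp_pos _).le (hpos x)
      -- `w'' = (s²/4 - 1 + Φ) w` and `s²/4 - 1 = -2δ`
      calc _ = -δ * (e x * Φ x) + e x * Φ x * (Φ x - δ) := by rw [hδ_def]; ring
        _ ≤ -δ * (e x * Φ x) := add_le_of_nonpos_right (mul_nonpos_of_nonneg_of_nonpos hewΦ
          (sub_nonpos.2 hx.le))
  filter_upwards [hwzero] with x hx
  exact (mul_eq_zero.1 hx).resolve_left (Real.exp_pos _).ne'

/-- Minimal speed of FKPP fronts: if a nonnegative `C²` profile `Φ` solves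
`Φ'' + sΦ' + Φ(1−Φ) = 0` with `Φ(−∞) = 1` and `Φ(+∞) = 0`, then `|s| ≥ 2`;
no nonnegative FKPP front exists with speed below the minimal speed `2`. -/
theorem FKPP_front_speed_at_least_two
    (s : ℝ) (Φ : ℝ → ℝ) (hΦ : ContDiff ℝ 2 Φ)
    (hODE : ∀ η : ℝ, deriv (deriv Φ) η + s * deriv Φ η + Φ η * (1 - Φ η) = 0)
    (hpos : ∀ η : ℝ, 0 ≤ Φ η)
    (hlim1 : Tendsto Φ atBot (𝓝 1)) (hlim0 : Tendsto Φ atTop (𝓝 0)) :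
    2 ≤ |s| := by
  by_contra! hs
  have hΦ1 : ∀ η, HasDerivAt Φ (deriv Φ η) η := fun η =>
    (hΦ.differentiable two_ne_zero η).hasDerivAt
  have hΦ2 : ∀ η, HasDerivAt (deriv Φ) (-s * deriv Φ η - Φ η * (1 - Φ η)) η := fun η =>
    (hΦ.differentiable_deriv_two η).hasDerivAt.congr_deriv (by linarith [hODE η])
  have hzero : Φ = 0 := secondOrderODE_eq_zero_of_eventuallyEq_zero (f := fun u => u * (1 - u))
    (by fun_prop) (by simp) hΦ1 hΦ2
    (FKPP_profile_eventuallyEq_zero_of_abs_lt_two hs hΦ1 hΦ2 hpos hlim0)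
  rw [hzero] at hlim1
  exact zero_ne_one (tendsto_nhds_unique tendsto_const_nhds hlim1)
end

section
/- Let a ∈ (0,1/2), s ∈ ℝ, and let Φ : ℝ → ℝ be twice continuously differentiable with 0 ≤ Φ(η) ≤ 1 for all η, Φ''(η) + s·Φ'(η) + Φ(η)(1 − Φ(η))(Φ(η) − a) = 0 for all η ∈ ℝ, Φ(η) → 0 as η → −∞ and Φ(η) → 1 as η → +∞. Then necessarily s = √2·(a − 1/2). That is, the wave speed of the bistable travelling front is unique and given by the explicit formula s*(a) = √2(a − 1/2) < 0. -/
/-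
In the phase plane `(u, u')` the curve `u' = u (1 - u) / √2` is the orbit of the explicit front
`(1 + exp (-η / √2))⁻¹`, and for speed `s` the quantity `u' - u (1 - u) / √2` has derivative
`(a - 1/2 - s / √2) u (1 - u)` wherever it vanishes. So if `s < √2 (a - 1/2)`, orbits cross the
curve only upwards, while a front starts above it and ends below it. Near `-∞` the Riccati
variable `u'/u` cannot stay below the unstable eigenvalue of `0` (otherwise the Riccati equation
drives it below `0` on a half-line, where `u` then increases backwards although `u → 0`), and
this eigenvalue exceeds `1/√2`. Near `+∞` the reflected front
`1 - u (-η)`, a front for `(1 - a, -s)`, has its Riccati variable bounded by the unstable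
eigenvalue of `1` (above it the Riccati equation blows up in finite backward time), which is
below `1/√2`. The reflection also turns `√2 (a - 1/2) ≤ s` into the reverse inequality.
-/

open Filter Topology Set

theorem lt_of_deriv_pos_at_level {f f' : ℝ → ℝ} {x y b : ℝ} (hxy : x ≤ y)
    (hf : ∀ t ∈ Icc x y, HasDerivAt f (f' t) t) (hb : ∀ t ∈ Ico x y, f t = b → 0 < f' t)
    (hy : f y < b) : f x < b := by
  by_contra! hx
  have hby : b ≤ f y :=
    image_le_of_deriv_right_lt_deriv_boundary' continuousOn_const
      (fun t _ => hasDerivWithinAt_const t _ b) hx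
      (fun t ht => (hf t ht).continuousAt.continuousWithinAt)
      (fun t ht => (hf t (Ico_subset_Icc_self ht)).hasDerivWithinAt)
      (fun t ht hft => hb t ht hft.symm) ⟨hxy, le_rfl⟩
  exact hy.not_ge hby

theorem exists_lt_of_le_deriv {f f' : ℝ → ℝ} {x₀ c : ℝ}
    (hf : ∀ x ≤ x₀, HasDerivAt f (f' x) x) (hc : 0 < c) (h : ∀ x ≤ x₀, c ≤ f' x) (b : ℝ) :
    ∃ x ≤ x₀, f x < b := by
  set x := x₀ - (|f x₀ - b| + 1) / c
  have hx : x < x₀ := sub_lt_self _ (by positivity)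
  obtain ⟨ξ, hξ, hslope⟩ := exists_hasDerivAt_eq_slope f f' hx
    (fun t ht => (hf t ht.2).continuousAt.continuousWithinAt) (fun t ht => hf t ht.2.le)
  have hgrowth : c * (x₀ - x) ≤ f x₀ - f x := by
    rw [← le_div_iff₀ (sub_pos.2 hx), ← hslope]
    exact h ξ hξ.2.le
  have hcx : c * (x₀ - x) = |f x₀ - b| + 1 := by
    simp only [x, sub_sub_cancel]; field_simp
  refine ⟨x, hx.le, ?_⟩
  linarith [le_abs_self (f x₀ - b)]

theorem false_of_deriv_le_neg_sq {f f' : ℝ → ℝ} {x₀ : ℝ}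
    (hf : ∀ x ≤ x₀, HasDerivAt f (f' x) x) (hpos : ∀ x ≤ x₀, 0 < f x)
    (h : ∀ x ≤ x₀, f' x ≤ -f x ^ 2) : False := by
  have hinv : ∀ x ≤ x₀, HasDerivAt (fun y => (f y)⁻¹) (-f' x / f x ^ 2) x :=
    fun x hx => (hf x hx).inv (hpos x hx).ne'
  have hslope : ∀ x ≤ x₀, 1 ≤ -f' x / f x ^ 2 := fun x hx => by
    rw [le_div_iff₀ (pow_pos (hpos x hx) 2)]
    linarith [h x hx]
  obtain ⟨x, hx, hneg⟩ := exists_lt_of_le_deriv hinv one_pos hslope 0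
  exact (inv_pos.2 (hpos x hx)).not_gt hneg

def bistable (a u : ℝ) : ℝ := u * (1 - u) * (u - a)

structure SolvesNagumo (a s : ℝ) (u v : ℝ → ℝ) : Prop where
  hasDerivAt_fst : ∀ η, HasDerivAt u (v η) η
  hasDerivAt_snd : ∀ η, HasDerivAt v (-(s * v η) - bistable a (u η)) η

theorem solvesNagumo_of_contDiff {a s : ℝ} {Φ : ℝ → ℝ} (hΦ : ContDiff ℝ 2 Φ)
    (hODE : ∀ η, deriv (deriv Φ) η + s * deriv Φ η + Φ η * (1 - Φ η) * (Φ η - a) = 0) :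
    SolvesNagumo a s Φ (deriv Φ) := by
  have hΦ' : ContDiff ℝ 1 (deriv Φ) := hΦ.iterate_deriv' 1 1
  refine ⟨fun η => ((hΦ.differentiable two_ne_zero) η).hasDerivAt, fun η => ?_⟩
  refine ((hΦ'.differentiable one_ne_zero) η).hasDerivAt.congr_deriv ?_
  rw [bistable]
  linarith [hODE η]

namespace SolvesNagumo

variable {a s : ℝ} {u v : ℝ → ℝ}

theorem reflect (h : SolvesNagumo a s u v) :
    SolvesNagumo (1 - a) (-s) (fun η => 1 - u (-η)) (fun η => v (-η)) := by
  refine ⟨fun η => ?_, fun η => ?_⟩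
  · simpa using ((h.hasDerivAt_fst (-η)).comp η (hasDerivAt_neg η)).const_sub 1
  · refine ((h.hasDerivAt_snd (-η)).comp η (hasDerivAt_neg η)).congr_deriv ?_
    simp only [bistable]
    ring

theorem fst_eq_zero_of_eq_zero (h : SolvesNagumo a s u v) (ha : a ∈ Icc 0 1)
    (hu : ∀ η, u η ∈ Icc 0 1) {η₀ : ℝ} (hu₀ : u η₀ = 0) (hv₀ : v η₀ = 0) :
    ∀ η ≥ η₀, u η = 0 := by
  have hF : ∀ η, |bistable a (u η)| ≤ |u η| := fun η => by
    obtain ⟨h0, h1⟩ := hu η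
    have : |(1 - u η) * (u η - a)| ≤ 1 := by
      rw [abs_le]; constructor <;> nlinarith [ha.1, ha.2]
    rw [bistable, mul_assoc, abs_mul]
    exact mul_le_of_le_one_right (abs_nonneg _) this
  have hd : ∀ η, HasDerivAt (fun t => (u t, v t)) (v η, -(s * v η) - bistable a (u η)) η :=
    fun η => (h.hasDerivAt_fst η).prodMk (h.hasDerivAt_snd η)
  intro η hη
  have := eq_zero_of_abs_deriv_le_mul_abs_self_of_eq_zero_right (K := 1 + |s|)
    (fun t _ => (hd t).continuousAt.continuousWithinAt) (fun t _ => (hd t).hasDerivWithinAt)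
    (by simp [hu₀, hv₀]) (fun t _ => ?_) η ⟨hη, le_rfl⟩
  · exact congrArg Prod.fst this
  · simp only [Prod.norm_def, Real.norm_eq_abs]
    have h1 := hF t
    have h2 : |s * v t| ≤ |s| * |v t| := (abs_mul _ _).le
    have h3 := abs_sub (-(s * v t)) (bistable a (u t))
    rw [abs_neg] at h3
    refine max_le ?_ ?_
    · nlinarith [le_max_right |u t| |v t|, abs_nonneg s, abs_nonneg (v t)]
    · nlinarith [le_max_right |u t| |v t|, le_max_left |u t| |v t|, abs_nonneg s, abs_nonneg (v t)]

theorem fst_pos (h : SolvesNagumo a s u v) (ha : a ∈ Icc 0 1) (hu : ∀ η, u η ∈ Icc 0 1)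
    (hlim : Tendsto u atTop (𝓝 1)) (η : ℝ) : 0 < u η := by
  refine (hu η).1.lt_of_ne fun hu₀ => ?_
  have hmin : IsLocalMin u η := Eventually.of_forall fun t => hu₀ ▸ (hu t).1
  have hzero := h.fst_eq_zero_of_eq_zero ha hu hu₀.symm
    (hmin.hasDerivAt_eq_zero (h.hasDerivAt_fst η))
  have : Tendsto u atTop (𝓝 0) :=
    tendsto_const_nhds.congr' (eventually_atTop.2 ⟨η, fun t ht => (hzero t ht).symm⟩)
  exact one_ne_zero (tendsto_nhds_unique hlim this)

theorem hasDerivAt_div (h : SolvesNagumo a s u v) {η : ℝ} (hu : u η ≠ 0) :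
    HasDerivAt (fun t => v t / u t)
      (a - (v η / u η) ^ 2 - s * (v η / u η) - u η * (1 + a - u η)) η := by
  refine ((h.hasDerivAt_snd η).div (h.hasDerivAt_fst η) hu).congr_deriv ?_
  simp only [bistable]
  field_simp
  ring

theorem div_le_of_le_sq_add_mul (h : SolvesNagumo a s u v) (ha : 0 < a)
    (hu : ∀ η, 0 < u η ∧ u η ≤ 1) {w : ℝ} (hw : 0 < w) (hwa : a ≤ w ^ 2 + s * w) (η : ℝ) :
    v η / u η ≤ w := by
  have hW := fun t => h.hasDerivAt_div (hu t).1.ne'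
  have hperturb : ∀ t, 0 < u t * (1 + a - u t) :=
    fun t => mul_pos (hu t).1 (by linarith [(hu t).2])
  by_contra! hη
  have habove : ∀ t ≤ η, w < v t / u t := fun t ht => by
    refine neg_lt_neg_iff.1 <| lt_of_deriv_pos_at_level (f := fun t => -(v t / u t)) ht
      (fun t _ => (hW t).neg) (fun t _ hwt => ?_) (neg_lt_neg hη)
    rw [neg_inj.1 hwt]
    linarith [hperturb t]
  refine false_of_deriv_le_neg_sq (fun t _ => (hW t).sub_const w)
    (fun t ht => sub_pos.2 (habove t ht)) (fun t ht => ?_)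
  have hsw : 0 < 2 * w + s := by nlinarith
  nlinarith [hperturb t, mul_pos (sub_pos.2 (habove t ht)) hsw]

theorem exists_lt_div_of_sq_add_mul_lt (h : SolvesNagumo a s u v) (ha : 0 < a)
    (hu : ∀ η, 0 < u η) (hlim : Tendsto u atBot (𝓝 0)) {w : ℝ} (hw : 0 ≤ w)
    (hwa : w ^ 2 + s * w < a) (N : ℝ) : ∃ η ≤ N, w < v η / u η := by
  have hW := fun t => h.hasDerivAt_div (hu t).ne'
  by_contra! hbelow
  set m := min a (a - w ^ 2 - s * w)
  have hm : 0 < m := lt_min ha (by linarith)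
  have hband : ∀ x ∈ Icc 0 w, m ≤ a - x ^ 2 - s * x := fun x ⟨hx0, hxw⟩ => by
    have h1 : m ≤ a := min_le_left _ _
    have h2 : m ≤ a - w ^ 2 - s * w := min_le_right _ _
    rcases hw.eq_or_lt with rfl | hw'
    · obtain rfl : x = 0 := le_antisymm hxw hx0
      simpa using h1
    · nlinarith [mul_nonneg (mul_nonneg hx0 hw) (sub_nonneg.2 hxw)]
  obtain ⟨N', hN'⟩ := eventually_atBot.1 <|
    (hlim.const_mul (1 + a)).eventually (gt_mem_nhds (by rw [mul_zero]; exact half_pos hm))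
  have hsmall : ∀ t ≤ min N N', u t * (1 + a - u t) < m / 2 := fun t ht => by
    nlinarith [hN' t (ht.trans (min_le_right _ _)), hu t]
  obtain ⟨η₃, hη₃, hneg⟩ : ∃ η₃ ≤ min N N', v η₃ / u η₃ < 0 := by
    by_contra! hnn
    obtain ⟨x, hx, hx'⟩ := exists_lt_of_le_deriv (fun t _ => hW t) (half_pos hm) (fun t ht => by
      have := hband _ ⟨hnn t ht, hbelow t (ht.trans (min_le_left _ _))⟩
      linarith [hsmall t ht]) 0
    exact (hnn x hx).not_gt hx'
  have hvneg : ∀ t ≤ η₃, v t < 0 := fun t ht => by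
    refine neg_of_div_neg_left ?_ (hu t).le
    refine lt_of_deriv_pos_at_level (f := fun t => v t / u t) ht (fun t _ => hW t)
      (fun t ht' hWt => ?_) hneg
    rw [hWt]
    linarith [hsmall t (ht'.2.le.trans hη₃), min_le_left a (a - w ^ 2 - s * w)]
  have hanti : AntitoneOn u (Iic η₃) := antitoneOn_of_hasDerivWithinAt_nonpos (convex_Iic η₃)
    (fun t _ => (h.hasDerivAt_fst t).continuousAt.continuousWithinAt)
    (fun t _ => (h.hasDerivAt_fst t).hasDerivWithinAt)
    (fun t ht => (hvneg t (interior_subset (s := Iic η₃) ht)).le)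
  have : u η₃ ≤ 0 := ge_of_tendsto hlim <| eventually_atBot.2
    ⟨η₃, fun t ht => hanti (mem_Iic.2 ht) (mem_Iic.2 le_rfl) ht⟩
  exact (hu η₃).not_ge this

theorem hasDerivAt_sub_logistic (h : SolvesNagumo a s u v) {k : ℝ} (hk : k ^ 2 = 1 / 2) (η : ℝ) :
    HasDerivAt (fun t => v t - k * u t * (1 - u t))
      (-(s + k * (1 - 2 * u η)) * (v η - k * u η * (1 - u η))
        + (a - 1 / 2 - s * k) * (u η * (1 - u η))) η := by
  have hu := h.hasDerivAt_fst η
  refine ((h.hasDerivAt_snd η).sub ((hu.const_mul k).mul (hu.const_sub 1))).congr_deriv ?_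
  simp only [bistable]
  linear_combination (-(u η * (1 - u η)) * (1 - 2 * u η)) * hk

theorem sqrt_two_mul_le_speed (h : SolvesNagumo a s u v) (ha₀ : 0 < a) (ha₁ : a < 1)
    (hu : ∀ η, 0 < u η ∧ u η < 1) (hlim₀ : Tendsto u atBot (𝓝 0))
    (hlim₁ : Tendsto u atTop (𝓝 1)) : √2 * (a - 1 / 2) ≤ s := by
  by_contra! hs
  set k := √2 / 2
  have hk : k ^ 2 = 1 / 2 := by rw [div_pow, Real.sq_sqrt zero_le_two]; norm_num
  have hk₀ : 0 < k := by positivity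
  have hc : 0 < a - 1 / 2 - s * k := by
    have h2k : √2 * k = 1 := by
      rw [mul_div_assoc', Real.mul_self_sqrt zero_le_two, div_self two_ne_zero]
    have : s * k < √2 * (a - 1 / 2) * k := mul_lt_mul_of_pos_right hs hk₀
    rw [mul_right_comm, h2k, one_mul] at this
    linarith
  set Q := fun t => v t - k * u t * (1 - u t)
  -- the unstable eigenvalue of the endstate `1`
  obtain ⟨w, ⟨hw₀, hwk⟩, hw⟩ : ∃ w ∈ Ioo 0 k, w ^ 2 - s * w - (1 - a) = 0 :=
    intermediate_value_Ioo hk₀.le (by fun_prop) ⟨by linarith, by nlinarith⟩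
  have hbound : ∀ η, v η ≤ w * (1 - u η) := fun η => by
    have := h.reflect.div_le_of_le_sq_add_mul (by linarith)
      (fun t => ⟨by linarith [(hu (-t)).2], by linarith [(hu (-t)).1]⟩) hw₀ (by linarith) (-η)
    simp only [neg_neg] at this
    exact (div_le_iff₀ (by linarith [(hu η).2])).1 this
  obtain ⟨η₂, hη₂⟩ := ((hlim₁.const_mul k).eventually (lt_mem_nhds (by linarith))).exists
  have hQ₂ : Q η₂ < 0 := by
    simp only [Q]
    nlinarith [hbound η₂, (hu η₂).2]
  have hQneg : ∀ η ≤ η₂, Q η < 0 := fun η hη =>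
    lt_of_deriv_pos_at_level hη (fun t _ => h.hasDerivAt_sub_logistic hk t) (fun t _ hQt => by
      rw [show v t - k * u t * (1 - u t) = 0 from hQt, mul_zero, zero_add]
      exact mul_pos hc (mul_pos (hu t).1 (sub_pos.2 (hu t).2))) hQ₂
  obtain ⟨η, hη, hkη⟩ :=
    h.exists_lt_div_of_sq_add_mul_lt ha₀ (fun t => (hu t).1) hlim₀ hk₀.le (by nlinarith) η₂
  have hkv : k * u η < v η := (lt_div_iff₀ (hu η).1).1 hkη
  have hQη := hQneg η hη
  simp only [Q] at hQη
  nlinarith [mul_pos hk₀ (pow_pos (hu η).1 2)]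

end SolvesNagumo

/-- Uniqueness of the bistable front speed: if for `a ∈ (0,1/2)` a `C²`
profile `Φ` with values in `[0,1]` solves `Φ'' + sΦ' + Φ(1−Φ)(Φ−a) = 0` with
`Φ(−∞) = 0` and `Φ(+∞) = 1`, then necessarily `s = √2(a − 1/2)`. -/
theorem bistable_front_speed_unique
    (a : ℝ) (ha : a ∈ Set.Ioo (0 : ℝ) (1/2)) (s : ℝ)
    (Φ : ℝ → ℝ) (hΦ : ContDiff ℝ 2 Φ)
    (hrange : ∀ η : ℝ, 0 ≤ Φ η ∧ Φ η ≤ 1)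
    (hODE : ∀ η : ℝ,
      deriv (deriv Φ) η + s * deriv Φ η + Φ η * (1 - Φ η) * (Φ η - a) = 0)
    (hlim0 : Tendsto Φ atBot (𝓝 0)) (hlim1 : Tendsto Φ atTop (𝓝 1)) :
    s = Real.sqrt 2 * (a - 1/2) := by
  obtain ⟨ha₀, ha₁⟩ := ha
  have hsol := solvesNagumo_of_contDiff hΦ hODE
  have hrefl := hsol.reflect
  have hlim0' : Tendsto (fun η => 1 - Φ (-η)) atTop (𝓝 1) := by
    simpa using (hlim0.comp tendsto_neg_atTop_atBot).const_sub 1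
  have hlim1' : Tendsto (fun η => 1 - Φ (-η)) atBot (𝓝 0) := by
    simpa using (hlim1.comp tendsto_neg_atBot_atTop).const_sub 1
  have hpos := hsol.fst_pos ⟨ha₀.le, by linarith⟩ hrange hlim1
  have hlt : ∀ η, Φ η < 1 := fun η => by
    have := hrefl.fst_pos ⟨by linarith, by linarith⟩
      (fun t => ⟨by linarith [(hrange (-t)).2], by linarith [(hrange (-t)).1]⟩) hlim0' (-η)
    simpa using this
  have h₁ := hsol.sqrt_two_mul_le_speed ha₀ (by linarith) (fun η => ⟨hpos η, hlt η⟩) hlim0 hlim1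
  have h₂ := hrefl.sqrt_two_mul_le_speed (by linarith) (by linarith)
    (fun η => ⟨by linarith [hlt (-η)], by linarith [hpos (-η)]⟩) hlim1' hlim0'
  linarith
end

section
/- Let a ∈ (0,1/2), let s = √2·(a − 1/2), and let Φ : ℝ → ℝ be twice continuously differentiable with 0 ≤ Φ(η) ≤ 1 for all η, Φ''(η) + s·Φ'(η) + Φ(η)(1 − Φ(η))(Φ(η) − a) = 0 for all η ∈ ℝ, Φ(η) → 0 as η → −∞ and Φ(η) → 1 as η → +∞. Then there exists η₀ ∈ ℝ such that Φ(η) = (1/2)(1 + tanh(√2·(η + η₀)/4)) for all η ∈ ℝ; i.e., the bistable front profile is unique up to translation and coincides with the explicit tanh profile. -/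
/-!
With `κ = √2/2`, the deviation `w = Φ' - κΦ(1-Φ)` of a travelling wave from the logistic
equation satisfies the linear equation `w' = √2(Φ - a) w`, so `w = w(0) exp ∫₀^η √2(Φ - a)`.
As `Φ → 1 > a` the exponent grows linearly, whereas `w` stays bounded at times where `Φ'` is
small, and such times exist since `Φ` converges; hence `w ≡ 0`. Thus `Φ` solves the logistic
equation `Φ' = κΦ(1-Φ)`, whose `[0,1]`-valued solutions are determined by one value because the
right-hand side is Lipschitz on `[0,1]`. The endstates force `0 < Φ(0) < 1`, and a translate of
the tanh profile, which solves the same equation, takes the value `Φ(0)` at `0`.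
-/

open Filter Topology Set Real

theorem Real.hasDerivAt_tanh (x : ℝ) : HasDerivAt tanh (1 - tanh x ^ 2) x := by
  have hc : cosh x ≠ 0 := (cosh_pos x).ne'
  have h := (hasDerivAt_sinh x).div (hasDerivAt_cosh x) hc
  rw [show sinh / cosh = tanh from funext fun y => (tanh_eq_sinh_div_cosh y).symm] at h
  refine h.congr_deriv ?_
  rw [tanh_eq_sinh_div_cosh]
  field_simp

theorem eq_mul_exp_integral_of_hasDerivAt {w g : ℝ → ℝ} (hg : Continuous g)
    (hw : ∀ t, HasDerivAt w (g t * w t) t) (t : ℝ) :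
    w t = w 0 * exp (∫ s in (0)..t, g s) := by
  set G : ℝ → ℝ := fun t => ∫ s in (0)..t, g s
  have hG : ∀ t, HasDerivAt G (g t) t := fun t => (hg.integral_hasStrictDerivAt 0 t).hasDerivAt
  have hderiv_zero : ∀ t, HasDerivAt (fun t => w t * exp (-G t)) 0 t := fun t =>
    ((hw t).mul (hG t).neg.exp).congr_deriv (by ring)
  have h := is_const_of_deriv_eq_zero (fun t => (hderiv_zero t).differentiableAt)
    (fun t => (hderiv_zero t).deriv) t 0
  simp only [G, intervalIntegral.integral_same, neg_zero, exp_zero, mul_one] at h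
  rw [← h, mul_assoc, ← exp_add, neg_add_cancel, exp_zero, mul_one]

theorem tendsto_atTop_of_hasDerivAt_of_tendsto_pos {f f' : ℝ → ℝ} {L : ℝ}
    (hf : ∀ t, HasDerivAt f (f' t) t) (hL : 0 < L) (hf' : Tendsto f' atTop (𝓝 L)) :
    Tendsto f atTop atTop := by
  obtain ⟨M, hM⟩ := eventually_atTop.mp (hf'.eventually (eventually_gt_nhds (half_lt_self hL)))
  have hdiff : Differentiable ℝ f := fun t => (hf t).differentiableAt
  have hgrowth : ∀ t, M ≤ t → L / 2 * (t - M) ≤ f t - f M := fun t ht =>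
    (convex_Ici M).mul_sub_le_image_sub_of_le_deriv hdiff.continuous.continuousOn
      hdiff.differentiableOn (fun x hx => by
        rw [interior_Ici] at hx
        exact (hf x).deriv ▸ (hM x (le_of_lt hx)).le) M self_mem_Ici t ht ht
  have hlin : Tendsto (fun t => f M + L / 2 * (t - M)) atTop atTop :=
    tendsto_atTop_add_const_left _ _
      ((tendsto_atTop_add_const_right _ _ tendsto_id).const_mul_atTop (half_pos hL))
  exact tendsto_atTop_mono' atTop (eventually_atTop.mpr ⟨M, fun t ht => by
    linarith [hgrowth t ht]⟩) hlin

theorem Filter.Tendsto.frequently_abs_deriv_lt {f : ℝ → ℝ} {l : ℝ} (hf : Differentiable ℝ f)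
    (hlim : Tendsto f atTop (𝓝 l)) {ε : ℝ} (hε : 0 < ε) :
    ∃ᶠ t in atTop, |deriv f t| < ε := by
  obtain ⟨N, hN⟩ := eventually_atTop.mp
    (hlim.eventually (Metric.ball_mem_nhds l (half_pos hε)))
  refine frequently_atTop.mpr fun A => ?_
  set x := max A N
  obtain ⟨c, hc, hslope⟩ := exists_deriv_eq_slope f (lt_add_one x)
    hf.continuous.continuousOn hf.differentiableOn
  refine ⟨c, (le_max_left A N).trans hc.1.le, ?_⟩
  have h1 := hN (x + 1) (by linarith [le_max_right A N])
  have h2 := hN x (le_max_right A N)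
  rw [Real.dist_eq, abs_lt] at h1 h2
  rw [hslope, add_sub_cancel_left, div_one, abs_lt]
  constructor <;> linarith

theorem eq_zero_of_hasDerivAt_mul_of_frequently_bounded {w g : ℝ → ℝ} {L C : ℝ}
    (hg : Continuous g) (hL : 0 < L) (hgL : Tendsto g atTop (𝓝 L))
    (hw : ∀ t, HasDerivAt w (g t * w t) t) (hbdd : ∃ᶠ t in atTop, |w t| ≤ C) (t : ℝ) :
    w t = 0 := by
  suffices hw0 : w 0 = 0 by rw [eq_mul_exp_integral_of_hasDerivAt hg hw t, hw0, zero_mul]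
  by_contra hne
  have hgrowth : Tendsto (fun t => |w 0| * exp (∫ s in (0)..t, g s)) atTop atTop :=
    (tendsto_exp_atTop.comp (tendsto_atTop_of_hasDerivAt_of_tendsto_pos
      (fun t => (hg.integral_hasStrictDerivAt 0 t).hasDerivAt) hL hgL)).const_mul_atTop
      (abs_pos.mpr hne)
  refine (hgrowth.eventually_gt_atTop C).and_frequently hbdd |>.exists.elim fun t ht => ?_
  rw [eq_mul_exp_integral_of_hasDerivAt hg hw t, abs_mul, abs_of_pos (exp_pos _)] at ht
  exact absurd ht.2 (not_le.mpr ht.1)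

theorem lipschitzOnWith_logistic (κ : ℝ) :
    LipschitzOnWith ‖κ‖₊ (fun u => κ * u * (1 - u)) (Icc 0 1) := by
  refine LipschitzOnWith.of_dist_le_mul fun x hx y hy => ?_
  rw [Real.dist_eq, Real.dist_eq, coe_nnnorm, Real.norm_eq_abs]
  have hfactor : κ * x * (1 - x) - κ * y * (1 - y) = κ * (x - y) * (1 - x - y) := by ring
  have hle : |1 - x - y| ≤ 1 := abs_le.mpr ⟨by linarith [hx.2, hy.2], by linarith [hx.1, hy.1]⟩
  rw [hfactor, abs_mul, abs_mul]
  exact mul_le_of_le_one_right (by positivity) hle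

theorem logistic_solution_unique {κ : ℝ} {u v : ℝ → ℝ}
    (hu : ∀ t, HasDerivAt u (κ * u t * (1 - u t)) t) (hu01 : ∀ t, u t ∈ Icc 0 1)
    (hv : ∀ t, HasDerivAt v (κ * v t * (1 - v t)) t) (hv01 : ∀ t, v t ∈ Icc 0 1)
    {t₀ : ℝ} (h : u t₀ = v t₀) : u = v :=
  ODE_solution_unique_univ (v := fun _ u => κ * u * (1 - u)) (s := fun _ => Icc 0 1)
    (fun _ => lipschitzOnWith_logistic κ) (fun t => ⟨hu t, hu01 t⟩) (fun t => ⟨hv t, hv01 t⟩) h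

theorem logistic_solution_mem_Ioo {κ : ℝ} {u : ℝ → ℝ}
    (hu : ∀ t, HasDerivAt u (κ * u t * (1 - u t)) t) (hu01 : ∀ t, u t ∈ Icc 0 1)
    (hbot : Tendsto u atBot (𝓝 0)) (htop : Tendsto u atTop (𝓝 1)) (t : ℝ) :
    u t ∈ Ioo 0 1 := by
  have hne_equilibrium : ∀ c ∈ Icc (0 : ℝ) 1, κ * c * (1 - c) = 0 → u t ≠ c :=
      fun c hc hzero hut => by
    have hu_eq : u = fun _ => c := logistic_solution_unique hu hu01
      (fun _ => by simpa [hzero] using hasDerivAt_const _ c) (fun _ => hc) (t₀ := t) hut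
    subst hu_eq
    have h0 := tendsto_nhds_unique tendsto_const_nhds hbot
    have h1 := tendsto_nhds_unique tendsto_const_nhds htop
    exact zero_ne_one (h0.symm.trans h1)
  exact ⟨(hu01 t).1.lt_of_ne (hne_equilibrium 0 (by simp) (by ring)).symm,
    (hu01 t).2.lt_of_ne (hne_equilibrium 1 (by simp) (by ring))⟩

noncomputable def bistableFront (η₀ η : ℝ) : ℝ :=
  (1/2) * (1 + tanh (√2 * (η + η₀) / 4))

theorem bistableFront_mem_Icc (η₀ η : ℝ) : bistableFront η₀ η ∈ Icc 0 1 := by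
  obtain ⟨hlo, hhi⟩ := tanh_bijOn.mapsTo (mem_univ (√2 * (η + η₀) / 4))
  constructor <;> unfold bistableFront <;> linarith

theorem hasDerivAt_bistableFront (η₀ η : ℝ) :
    HasDerivAt (bistableFront η₀)
      (√2 / 2 * bistableFront η₀ η * (1 - bistableFront η₀ η)) η := by
  have harg : HasDerivAt (fun η => √2 * (η + η₀) / 4) (√2 / 4) η := by
    simpa using (((hasDerivAt_id η).add_const η₀).const_mul √2).div_const 4
  refine (((hasDerivAt_tanh _).comp η harg).const_add 1 |>.const_mul (1/2)).congr_deriv ?_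
  unfold bistableFront
  ring

theorem exists_bistableFront_eq {p : ℝ} (hp : p ∈ Ioo 0 1) : ∃ η₀, bistableFront η₀ 0 = p := by
  obtain ⟨y, -, hy⟩ := tanh_surjOn (show 2 * p - 1 ∈ Ioo (-1) 1 by
    constructor <;> linarith [hp.1, hp.2])
  refine ⟨2 * √2 * y, ?_⟩
  have hsq : √2 * √2 = 2 := mul_self_sqrt zero_le_two
  rw [bistableFront, show √2 * (0 + 2 * √2 * y) / 4 = y by linear_combination y / 2 * hsq, hy]
  ring

theorem hasDerivAt_deviation_from_logistic {a : ℝ} {Φ : ℝ → ℝ}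
    (hΦ : Differentiable ℝ Φ) (hΦ' : Differentiable ℝ (deriv Φ))
    (hODE : ∀ η, deriv (deriv Φ) η + √2 * (a - 1/2) * deriv Φ η
      + Φ η * (1 - Φ η) * (Φ η - a) = 0) (η : ℝ) :
    HasDerivAt (fun η => deriv Φ η - √2 / 2 * Φ η * (1 - Φ η))
      (√2 * (Φ η - a) * (deriv Φ η - √2 / 2 * Φ η * (1 - Φ η))) η := by
  have hsq : √2 * √2 = 2 := mul_self_sqrt zero_le_two
  refine ((hΦ' η).hasDerivAt.sub
    (((hΦ η).hasDerivAt.const_mul (√2 / 2)).mul ((hΦ η).hasDerivAt.const_sub 1))).congr_deriv ?_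
  linear_combination hODE η + Φ η * (1 - Φ η) * (Φ η - a) / 2 * hsq

/-- Uniqueness up to translation of the bistable front profile: if for
`a ∈ (0,1/2)` and speed `s = √2(a − 1/2)` a `C²` profile `Φ` with values in
`[0,1]` solves `Φ'' + sΦ' + Φ(1−Φ)(Φ−a) = 0` with `Φ(−∞) = 0` and
`Φ(+∞) = 1`, then `Φ` is a translate of the explicit tanh profile:
`Φ(η) = (1/2)(1 + tanh(√2(η + η₀)/4))` for some `η₀ ∈ ℝ`. -/
theorem bistable_front_profile_unique_up_to_translation
    (a : ℝ) (ha : a ∈ Set.Ioo (0 : ℝ) (1/2))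
    (s : ℝ) (hs : s = Real.sqrt 2 * (a - 1/2))
    (Φ : ℝ → ℝ) (hΦ : ContDiff ℝ 2 Φ)
    (hrange : ∀ η : ℝ, 0 ≤ Φ η ∧ Φ η ≤ 1)
    (hODE : ∀ η : ℝ,
      deriv (deriv Φ) η + s * deriv Φ η + Φ η * (1 - Φ η) * (Φ η - a) = 0)
    (hlim0 : Tendsto Φ atBot (𝓝 0)) (hlim1 : Tendsto Φ atTop (𝓝 1)) :
    ∃ η₀ : ℝ, ∀ η : ℝ,
      Φ η = (1/2) * (1 + Real.tanh (Real.sqrt 2 * (η + η₀) / 4)) := by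
  subst hs
  obtain ⟨hΦd, -, hΦ'⟩ := contDiff_succ_iff_deriv.mp (show ContDiff ℝ (1 + 1) Φ from hΦ)
  have hΦ'd : Differentiable ℝ (deriv Φ) := hΦ'.differentiable one_ne_zero
  have hlogistic_bound : ∀ η, |√2 / 2 * Φ η * (1 - Φ η)| ≤ 1 := fun η => by
    obtain ⟨h0, h1⟩ := hrange η
    have hsqrt : √2 < 2 := by rw [sqrt_lt' two_pos]; norm_num
    rw [abs_le]; constructor <;> nlinarith [sqrt_nonneg 2, mul_nonneg h0 (sub_nonneg.mpr h1)]
  have hdeviation_bdd : ∃ᶠ η in atTop, |deriv Φ η - √2 / 2 * Φ η * (1 - Φ η)| ≤ 2 :=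
    (hlim1.frequently_abs_deriv_lt hΦd one_pos).mono fun η hη =>
      (abs_sub _ _).trans (by linarith [hlogistic_bound η])
  have hlogistic : ∀ η, HasDerivAt Φ (√2 / 2 * Φ η * (1 - Φ η)) η := fun η => by
    have hzero := eq_zero_of_hasDerivAt_mul_of_frequently_bounded
      (g := fun η => √2 * (Φ η - a)) (by fun_prop) (by nlinarith [sqrt_pos.mpr two_pos, ha.2])
      ((hlim1.sub_const a).const_mul √2)
      (hasDerivAt_deviation_from_logistic hΦd hΦ'd hODE) hdeviation_bdd η
    exact (hΦd η).hasDerivAt.congr_deriv (by linarith)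
  have hΦ01 : ∀ η, Φ η ∈ Icc 0 1 := fun η => hrange η
  obtain ⟨η₀, hη₀⟩ :=
    exists_bistableFront_eq (logistic_solution_mem_Ioo hlogistic hΦ01 hlim0 hlim1 0)
  exact ⟨η₀, congrFun (logistic_solution_unique hlogistic hΦ01 (hasDerivAt_bistableFront η₀)
    (bistableFront_mem_Icc η₀) hη₀.symm)⟩
end
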